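/- arXiv:1501.03238 — 7 statements merged into one kernel-verified Lean document; each statement's English description precedes it below -/
import Mathlib

section
/- Fix a complementary alphabet and a word P of length 2n. If the greedy algorithm applied to P produces edge e(i,j) (i.e., matches positions i < j), then every position k with i < k < j is matched by the greedy algorithm to some other position in {i+1,...,j-1}. -/
/-!
Model: a plane tree with n edges is encoded as a non-crossing perfect matching
on the 2n half-edge positions 0,…,2n-1 (0-indexed); a matched pair (i,j) with
i < j is the edge e(i,j) with left half-edge i and right half-edge j.
-/

/-- `M` is a perfect matching on positions `0,…,2n-1`. -/
def IsMatching (n : ℕ) (M : Finset (ℕ × ℕ)) : Prop :=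
  (∀ p ∈ M, p.1 < p.2 ∧ p.2 < 2 * n) ∧
  (∀ k, k < 2 * n → ∃! p, p ∈ M ∧ (p.1 = k ∨ p.2 = k))

/-- No two matched pairs cross. -/
def NonCrossing (M : Finset (ℕ × ℕ)) : Prop :=
  ∀ p ∈ M, ∀ q ∈ M, ¬ (p.1 < q.1 ∧ q.1 < p.2 ∧ p.2 < q.2)

/-- A plane tree on `n` edges: a non-crossing perfect matching on `0,…,2n-1`. -/
def IsPlaneTree (n : ℕ) (M : Finset (ℕ × ℕ)) : Prop :=
  IsMatching n M ∧ NonCrossing M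

/-- The plane tree `M` is valid for the word `P` (with complementation `comp`):
every matched pair consists of complementary letters. -/
def IsValid {A : Type*} (P : ℕ → A) (comp : A → A) (M : Finset (ℕ × ℕ)) : Prop :=
  ∀ p ∈ M, P p.2 = comp (P p.1)

/-- One pass of the greedy algorithm over positions `0,…,N-1`:
state is (stack of currently unmatched positions, most recent first;
list of matched pairs `(j,i)` with `j < i`). At each position `i`, if the most
recent unmatched position `j` carries a complementary letter, match `(j,i)`;
otherwise leave `i` unmatched. -/
def greedy {A : Type*} [DecidableEq A] (P : ℕ → A) (comp : A → A) :
    ℕ → List ℕ × List (ℕ × ℕ)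
  | 0 => ([], [])
  | (i+1) =>
    let s := greedy P comp i
    match s.1 with
    | [] => ([i], s.2)
    | j :: rest =>
      if P i = comp (P j) then (rest, (j, i) :: s.2)
      else (i :: j :: rest, s.2)

/-- The partial matching produced by the greedy algorithm on a word of length `2n`. -/
def greedyMatching {A : Type*} [DecidableEq A] (P : ℕ → A) (comp : A → A) (n : ℕ) :
    Finset (ℕ × ℕ) :=
  ((greedy P comp (2 * n)).2).toFinset

/-- Invariant of the greedy algorithm after processing positions `0,…,N-1`. -/
structure GreedyInv (N : ℕ) (st : List ℕ) (M : List (ℕ × ℕ)) : Prop where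
  chain : st.Pairwise (· > ·)
  stlt : ∀ s ∈ st, s < N
  plt : ∀ p ∈ M, p.1 < p.2 ∧ p.2 < N
  cover : ∀ k < N, k ∈ st ∨ ∃ p ∈ M, p.1 = k ∨ p.2 = k
  sep : ∀ s ∈ st, ∀ p ∈ M, ¬ (p.1 < s ∧ s < p.2)
  disj : ∀ s ∈ st, ∀ p ∈ M, s ≠ p.1 ∧ s ≠ p.2
  nest : ∀ p ∈ M, ∀ q ∈ M, (p.1 < q.1 ∧ q.1 < p.2) → (p.1 < q.2 ∧ q.2 < p.2)
  nest' : ∀ p ∈ M, ∀ q ∈ M, (p.1 < q.2 ∧ q.2 < p.2) → (p.1 < q.1 ∧ q.1 < p.2)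

theorem greedy_inv {A : Type*} [DecidableEq A] (P : ℕ → A) (comp : A → A) :
    ∀ N, GreedyInv N (greedy P comp N).1 (greedy P comp N).2 := by
  intro N
  induction N with
  | zero =>
    refine ⟨?_, ?_, ?_, ?_, ?_, ?_, ?_, ?_⟩ <;> simp [greedy]
  | succ i ih =>
    obtain ⟨chain, stlt, plt, cover, sep, disj, nest, nest'⟩ := ih
    rcases hst : (greedy P comp i).1 with _ | ⟨j, rest⟩
    · have he : greedy P comp (i+1) = ([i], (greedy P comp i).2) := by
        simp [greedy, hst]
      rw [he]
      refine ⟨by simp, by simp, ?_, ?_, ?_, ?_, nest, nest'⟩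
      · exact fun p hp => ⟨(plt p hp).1, Nat.lt_succ_of_lt (plt p hp).2⟩
      · intro k hk
        rcases Nat.lt_succ_iff_lt_or_eq.mp hk with h | h
        · rcases cover k h with h' | h'
          · rw [hst] at h'; simp at h'
          · exact Or.inr h'
        · subst h; exact Or.inl (by simp)
      · intro s hs p hp
        simp at hs; subst hs
        have := (plt p hp).2; omega
      · intro s hs p hp
        simp at hs; subst hs
        have h1 := (plt p hp).1
        have h2 := (plt p hp).2
        omega
    · have hj : j ∈ (greedy P comp i).1 := by rw [hst]; simp
      have hjlt : j < i := stlt j hj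
      rw [hst] at chain
      have hrest : ∀ s ∈ rest, s < j := (List.pairwise_cons.mp chain).1
      have hrestmem : ∀ s ∈ rest, s ∈ (greedy P comp i).1 := by
        intro s hs; rw [hst]; simp [hs]
      by_cases hPQ : P i = comp (P j)
      · have he : greedy P comp (i+1) = (rest, (j, i) :: (greedy P comp i).2) := by
          simp [greedy, hst, hPQ]
        rw [he]
        refine ⟨(List.pairwise_cons.mp chain).2, ?_, ?_, ?_, ?_, ?_, ?_, ?_⟩
        · exact fun s hs => Nat.lt_succ_of_lt (stlt s (hrestmem s hs))
        · intro p hp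
          rcases List.mem_cons.mp hp with h | h
          · subst h; exact ⟨hjlt, Nat.lt_succ_self i⟩
          · exact ⟨(plt p h).1, Nat.lt_succ_of_lt (plt p h).2⟩
        · intro k hk
          rcases Nat.lt_succ_iff_lt_or_eq.mp hk with h | h
          · rcases cover k h with h' | h'
            · rw [hst] at h'
              rcases List.mem_cons.mp h' with h'' | h''
              · right; exact ⟨(j, i), by simp, Or.inl h''.symm⟩
              · left; exact h''
            · obtain ⟨p, hp, hpk⟩ := h'
              exact Or.inr ⟨p, List.mem_cons_of_mem _ hp, hpk⟩
          · exact Or.inr ⟨(j, i), by simp, Or.inr h.symm⟩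
        · intro s hs p hp
          rcases List.mem_cons.mp hp with h | h
          · subst h; have := hrest s hs; simp; omega
          · exact sep s (hrestmem s hs) p h
        · intro s hs p hp
          rcases List.mem_cons.mp hp with h | h
          · subst h; have := hrest s hs
            constructor <;> simp <;> omega
          · exact disj s (hrestmem s hs) p h
        · intro p hp q hq h
          rcases List.mem_cons.mp hp with hp1 | hp1 <;>
            rcases List.mem_cons.mp hq with hq1 | hq1
          · subst hp1; subst hq1; simp at h
          · subst hp1
            have h1 := (plt q hq1).1
            have h2 := (plt q hq1).2
            simp at h ⊢; omega
          · subst hq1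
            exact absurd (by simpa using h) (sep j hj p hp1)
          · exact nest p hp1 q hq1 h
        · intro p hp q hq h
          rcases List.mem_cons.mp hp with hp1 | hp1 <;>
            rcases List.mem_cons.mp hq with hq1 | hq1
          · subst hp1; subst hq1; simp at h
          · subst hp1
            have h1 := (plt q hq1).1
            have h2 := (plt q hq1).2
            simp at h ⊢
            refine ⟨?_, by omega⟩
            by_contra hle
            have hne := (disj j hj q hq1).1
            exact sep j hj q hq1 (by omega)
          · subst hq1
            have := (plt p hp1).2
            simp at h; omega
          · exact nest' p hp1 q hq1 h
      · have he : greedy P comp (i+1) = (i :: j :: rest, (greedy P comp i).2) := by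
          simp [greedy, hst, hPQ]
        rw [he]
        have hmem' : ∀ s ∈ j :: rest, s ∈ (greedy P comp i).1 := by
          intro s hs; rw [hst]; exact hs
        refine ⟨?_, ?_, ?_, ?_, ?_, ?_, nest, nest'⟩
        · exact List.pairwise_cons.mpr ⟨fun s hs => stlt s (hmem' s hs), chain⟩
        · intro s hs
          rcases List.mem_cons.mp hs with h | h
          · omega
          · exact Nat.lt_succ_of_lt (stlt s (hmem' s h))
        · exact fun p hp => ⟨(plt p hp).1, Nat.lt_succ_of_lt (plt p hp).2⟩
        · intro k hk
          rcases Nat.lt_succ_iff_lt_or_eq.mp hk with h | h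
          · rcases cover k h with h' | h'
            · rw [hst] at h'; exact Or.inl (List.mem_cons_of_mem _ h')
            · exact Or.inr h'
          · subst h; exact Or.inl (by simp)
        · intro s hs p hp
          rcases List.mem_cons.mp hs with h | h
          · subst h; have := (plt p hp).2; omega
          · exact sep s (hmem' s h) p hp
        · intro s hs p hp
          rcases List.mem_cons.mp hs with h | h
          · subst h
            have h1 := (plt p hp).1
            have h2 := (plt p hp).2
            omega
          · exact disj s (hmem' s h) p hp

/-- If the greedy algorithm on a word `P` of length `2n` over a
complementary alphabet matches positions `i < j`, then every position strictly
between `i` and `j` is matched by the greedy algorithm within `{i+1,…,j-1}`. -/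
theorem greedy_interval_matched_within {A : Type*} [DecidableEq A]
    (comp : A → A) (hinv : Function.Involutive comp) (hff : ∀ a, comp a ≠ a)
    (n : ℕ) (P : ℕ → A)
    (i j : ℕ) (hij : (i, j) ∈ (greedy P comp (2 * n)).2)
    (k : ℕ) (hik : i < k) (hkj : k < j) :
    ∃ k', i < k' ∧ k' < j ∧
      ((k, k') ∈ (greedy P comp (2 * n)).2 ∨ (k', k) ∈ (greedy P comp (2 * n)).2) := by
  obtain ⟨chain, stlt, plt, cover, sep, disj, nest, nest'⟩ := greedy_inv P comp (2 * n)
  have hk2n : k < 2 * n := lt_trans hkj (plt (i, j) hij).2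
  rcases cover k hk2n with hks | ⟨p, hp, hpk⟩
  · exact absurd ⟨hik, hkj⟩ (sep k hks (i, j) hij)
  · obtain ⟨a, b⟩ := p
    rcases hpk with h | h <;> simp only at h
    · have hb := nest (i, j) hij (a, b) hp ⟨by omega, by omega⟩
      exact ⟨b, hb.1, hb.2, Or.inl (h ▸ hp)⟩
    · have ha := nest' (i, j) hij (a, b) hp ⟨by omega, by omega⟩
      exact ⟨a, ha.1, ha.2, Or.inr (h ▸ hp)⟩
end

section
/- The P-valid plane tree T₀ produced by the greedy algorithm admits no valid local move of type 2: there is no pair of adjacent edges e(i,j') and e(j,i') of T₀ with i < j < i' < j' such that p_i and p_j are equal letters (so replacing these edges by e(i,j) and e(i',j') would yield another P-valid plane tree). -/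
/-- A local move of type 2: two nested *adjacent* edges `e(i,j')`, `e(j,i')`
with `i < j < i' < j'` (adjacency: no edge lies strictly between them, i.e. no
edge `(a,b)` with `i < a < j` and `i' < b < j'`) are replaced by `e(i,j)` and
`e(i',j')`. -/
def Type2Move (M M' : Finset (ℕ × ℕ)) : Prop :=
  ∃ i j i' j', i < j ∧ j < i' ∧ i' < j' ∧
    (i, j') ∈ M ∧ (j, i') ∈ M ∧
    (¬ ∃ q ∈ M, i < q.1 ∧ q.1 < j ∧ i' < q.2 ∧ q.2 < j') ∧
    M' = insert (i, j) (insert (i', j') ((M.erase (i, j')).erase (j, i')))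

/-- A valid local move of type 2: a type 2 move whose initial and resulting
plane trees are both `P`-valid. -/
def ValidType2Move {A : Type*} (P : ℕ → A) (comp : A → A)
    (M M' : Finset (ℕ × ℕ)) : Prop :=
  Type2Move M M' ∧ IsValid P comp M ∧ IsValid P comp M'

/-!
Run the greedy algorithm as a stack machine. If `(i, j')` and `(j, i')` are greedy edges with
`i < j < i' < j'` and `p_j` is complementary to `p_i`, then at time `j` the position `i` is on the
stack but `j` is pushed rather than matched, so the top `x` of the stack at time `j` lies strictly
between `i` and `j`. Since `x` sits above `i`, it must be matched at some time `b < j'`; since `j`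
sits above `x` until time `i'`, also `b > i'`. The greedy edge `(x, b)` then lies between the two
edges, so they are not adjacent.
-/

namespace greedy

variable {A : Type*} [DecidableEq A] (P : ℕ → A) (comp : A → A)

abbrev stack (t : ℕ) : List ℕ := (greedy P comp t).1

abbrev pairs (t : ℕ) : List (ℕ × ℕ) := (greedy P comp t).2

theorem succ_cases (t : ℕ) :
    (stack P comp t = [] ∧ greedy P comp (t + 1) = ([t], pairs P comp t)) ∨
    (∃ x rest, stack P comp t = x :: rest ∧ P t = comp (P x) ∧
      greedy P comp (t + 1) = (rest, (x, t) :: pairs P comp t)) ∨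
    (∃ x rest, stack P comp t = x :: rest ∧ P t ≠ comp (P x) ∧
      greedy P comp (t + 1) = (t :: x :: rest, pairs P comp t)) := by
  rcases h : stack P comp t with _ | ⟨x, rest⟩
  · exact .inl ⟨rfl, by simp [greedy, h]⟩
  · by_cases hc : P t = comp (P x)
    · exact .inr <| .inl ⟨x, rest, rfl, hc, by simp [greedy, h, hc]⟩
    · exact .inr <| .inr ⟨x, rest, rfl, hc, by simp [greedy, h, hc]⟩

variable {P comp}

theorem mem_stack_succ {t a : ℕ} (h : a ∈ stack P comp (t + 1)) :
    a = t ∨ a ∈ stack P comp t := by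
  rcases succ_cases P comp t with
    ⟨h1, h2⟩ | ⟨x, rest, h1, -, h2⟩ | ⟨x, rest, h1, -, h2⟩ <;>
    simp only [stack, h2, h1, List.mem_cons] at h ⊢ <;> tauto

theorem lt_of_mem_stack {t a : ℕ} (h : a ∈ stack P comp t) : a < t := by
  induction t with
  | zero => simp [stack, greedy] at h
  | succ t ih =>
    rcases mem_stack_succ h with rfl | h
    · exact Nat.lt_succ_self a
    · exact Nat.lt_succ_of_lt (ih h)

theorem stack_sorted (t : ℕ) : (stack P comp t).Pairwise (· > ·) := by
  induction t with
  | zero => simp [stack, greedy]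
  | succ t ih =>
    rcases succ_cases P comp t with
      ⟨-, h2⟩ | ⟨x, rest, h1, -, h2⟩ | ⟨x, rest, h1, -, h2⟩ <;> simp only [stack, h2]
    · exact List.pairwise_singleton _ _
    · exact (h1 ▸ ih).of_cons
    · exact List.pairwise_cons.2 ⟨fun b hb => lt_of_mem_stack (h1 ▸ hb), h1 ▸ ih⟩

theorem lt_head_of_mem_stack {t a x : ℕ} {rest : List ℕ} (hs : stack P comp t = x :: rest)
    (ha : a ∈ stack P comp t) (hax : a ≠ x) : a < x := by
  have hsorted := stack_sorted (P := P) (comp := comp) t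
  rw [hs] at ha hsorted
  exact (List.pairwise_cons.1 hsorted).1 a ((List.mem_cons.1 ha).resolve_left hax)

theorem mem_stack_of_le {t t' a : ℕ} (h : a ∈ stack P comp t) (ht : t' ≤ t) (hat : a < t') :
    a ∈ stack P comp t' := by
  induction t, ht using Nat.le_induction with
  | base => exact h
  | succ t ht ih =>
    rcases mem_stack_succ h with rfl | h
    · omega
    · exact ih h

theorem mem_pairs_of_le {t t' : ℕ} (ht : t ≤ t') {p : ℕ × ℕ} (hp : p ∈ pairs P comp t) :
    p ∈ pairs P comp t' := by
  induction t', ht using Nat.le_induction with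
  | base => exact hp
  | succ t' _ ih =>
    rcases succ_cases P comp t' with ⟨-, h2⟩ | ⟨_, _, -, -, h2⟩ | ⟨_, _, -, -, h2⟩ <;>
      simp only [pairs, h2, List.mem_cons] <;> tauto

theorem stack_eq_cons_of_mem_pairs {t a b : ℕ} (h : (a, b) ∈ pairs P comp t) :
    b < t ∧ ∃ rest, stack P comp b = a :: rest := by
  induction t with
  | zero => simp [pairs, greedy] at h
  | succ t ih =>
    rcases succ_cases P comp t with
      ⟨-, h2⟩ | ⟨x, rest, h1, -, h2⟩ | ⟨_, _, -, -, h2⟩ <;>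
      simp only [pairs, h2, List.mem_cons, Prod.mk.injEq] at h
    · exact ⟨Nat.lt_succ_of_lt (ih h).1, (ih h).2⟩
    · rcases h with ⟨rfl, rfl⟩ | h
      · exact ⟨Nat.lt_succ_self b, rest, h1⟩
      · exact ⟨Nat.lt_succ_of_lt (ih h).1, (ih h).2⟩
    · exact ⟨Nat.lt_succ_of_lt (ih h).1, (ih h).2⟩

theorem mem_stack_succ_or_mem_pairs {t a : ℕ} (h : a ∈ stack P comp t) :
    a ∈ stack P comp (t + 1) ∨ (a, t) ∈ pairs P comp (t + 1) := by
  rcases succ_cases P comp t with ⟨h1, -⟩ | ⟨x, rest, h1, -, h2⟩ | ⟨_, _, h1, -, h2⟩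
  · simp [h1] at h
  · simp only [stack, pairs, h2, List.mem_cons, Prod.mk.injEq]
    rw [h1, List.mem_cons] at h
    tauto
  · simp only [stack, h2]
    exact .inl (List.mem_cons_of_mem _ (h1 ▸ h))

theorem exists_mem_pairs_of_mem_stack {t t' a : ℕ} (h : a ∈ stack P comp t) (ht : t ≤ t')
    (h' : a ∉ stack P comp t') :
    ∃ b, t ≤ b ∧ b < t' ∧ (a, b) ∈ pairs P comp (b + 1) := by
  induction t', ht using Nat.le_induction with
  | base => exact absurd h h'
  | succ t' ht ih =>
    by_cases ha : a ∈ stack P comp t'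
    · rcases mem_stack_succ_or_mem_pairs ha with ha' | hpair
      · exact absurd ha' h'
      · exact ⟨t', ht, Nat.lt_succ_self t', hpair⟩
    · obtain ⟨b, hb, hbt, hpair⟩ := ih ha
      exact ⟨b, hb, by omega, hpair⟩

theorem exists_push_of_mem_stack_succ {t : ℕ} (ht : t ∈ stack P comp (t + 1))
    (hne : stack P comp t ≠ []) : ∃ x rest, stack P comp t = x :: rest ∧
      P t ≠ comp (P x) ∧ stack P comp (t + 1) = t :: x :: rest := by
  rcases succ_cases P comp t with
    ⟨h1, -⟩ | ⟨x, rest, h1, -, h2⟩ | ⟨x, rest, h1, hc, h2⟩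
  · exact absurd h1 hne
  · simp only [stack, h2] at ht
    exact absurd (lt_of_mem_stack (h1 ▸ List.mem_cons_of_mem x ht)) (lt_irrefl t)
  · exact ⟨x, rest, h1, hc, by simp only [stack, h2]⟩

variable {T i j i' j' : ℕ}

theorem exists_push_between (hout : (i, j') ∈ pairs P comp T) (hin : (j, i') ∈ pairs P comp T)
    (hij : i < j) (hji' : j < i') (hi'j' : i' < j') (hcomp : P j = comp (P i)) :
    ∃ x rest, stack P comp (j + 1) = j :: x :: rest ∧ i < x ∧ x < j := by
  obtain ⟨-, rest₂, hsj'⟩ := stack_eq_cons_of_mem_pairs hout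
  obtain ⟨-, rest₁, hsi'⟩ := stack_eq_cons_of_mem_pairs hin
  have hi : i ∈ stack P comp j :=
    mem_stack_of_le (hsj' ▸ List.mem_cons_self) (by omega) hij
  have hj : j ∈ stack P comp (j + 1) :=
    mem_stack_of_le (hsi' ▸ List.mem_cons_self) (by omega) (by omega)
  obtain ⟨x, rest, hs, hc, hs'⟩ := exists_push_of_mem_stack_succ hj (List.ne_nil_of_mem hi)
  have hix : i ≠ x := fun h => hc (h ▸ hcomp)
  exact ⟨x, rest, hs', lt_head_of_mem_stack hs hi hix,
    lt_of_mem_stack (hs ▸ List.mem_cons_self)⟩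

theorem exists_pairs_between (hout : (i, j') ∈ pairs P comp T) (hin : (j, i') ∈ pairs P comp T)
    (hij : i < j) (hji' : j < i') (hi'j' : i' < j') (hcomp : P j = comp (P i)) :
    ∃ x b, (x, b) ∈ pairs P comp T ∧ i < x ∧ x < j ∧ i' < b ∧ b < j' := by
  obtain ⟨x, rest, hs, hix, hxj⟩ := exists_push_between hout hin hij hji' hi'j' hcomp
  have hx : x ∈ stack P comp (j + 1) := hs ▸ List.mem_cons_of_mem j List.mem_cons_self
  obtain ⟨hj'T, rest₂, hsj'⟩ := stack_eq_cons_of_mem_pairs hout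
  obtain ⟨-, rest₁, hsi'⟩ := stack_eq_cons_of_mem_pairs hin
  have hx' : x ∉ stack P comp j' := fun hx' => by
    have := lt_head_of_mem_stack hsj' hx' (by omega)
    omega
  obtain ⟨b, hjb, hbj', hxb⟩ := exists_mem_pairs_of_mem_stack hx (by omega) hx'
  obtain ⟨-, restb, hsb⟩ := stack_eq_cons_of_mem_pairs hxb
  have hi'b : i' < b := by
    by_contra! hbi'
    have hj : j ∈ stack P comp b :=
      mem_stack_of_le (hsi' ▸ List.mem_cons_self) hbi' (by omega)
    have := lt_head_of_mem_stack hsb hj (by omega)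
    omega
  exact ⟨x, b, mem_pairs_of_le (by omega) hxb, hix, hxj, hi'b, hbj'⟩

end greedy

theorem greedy_tree_no_valid_type2_move_general {A : Type*} [DecidableEq A]
    (comp : A → A)
    (n : ℕ) (P : ℕ → A) :
    ¬ ∃ M', ValidType2Move P comp (greedyMatching P comp n) M' := by
  rintro ⟨M', ⟨i, j, i', j', hij, hji', hi'j', hij'M, hji'M, hadj, rfl⟩, -, hvalid'⟩
  have hcomp : P j = comp (P i) := hvalid' (i, j) (Finset.mem_insert_self _ _)
  simp only [greedyMatching, List.mem_toFinset] at hij'M hji'M hadj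
  obtain ⟨x, b, hxb, hix, hxj, hi'b, hbj'⟩ :=
    greedy.exists_pairs_between hij'M hji'M hij hji' hi'j' hcomp
  exact hadj ⟨(x, b), hxb, hix, hxj, hi'b, hbj'⟩

/-- The greedy tree `T₀` admits no valid local move of type 2. -/
theorem greedy_tree_no_valid_type2_move {A : Type*} [DecidableEq A]
    (comp : A → A) (hinv : Function.Involutive comp) (hff : ∀ a, comp a ≠ a)
    (n : ℕ) (P : ℕ → A)
    (hex : ∃ M, IsPlaneTree n M ∧ IsValid P comp M) :
    ¬ ∃ M', ValidType2Move P comp (greedyMatching P comp n) M' :=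
  greedy_tree_no_valid_type2_move_general comp n P
end

section
/- If T is a P-valid plane tree different from the greedy tree T₀, then T admits at least one valid local move of type 2. -/
/-! If no adjacent nest `e(a,d) ⊃ e(b,c)` of `T` has `P b = comp (P a)`, the greedy algorithm
rebuilds `T`: by induction on the position `k`, its stack holds exactly the left ends of the
edges of `T` still open at `k`, in decreasing order. If `k` closes `e(x,k)`, non-crossing puts `x`
on top of the stack and validity makes the algorithm match them. If `k` opens `e(k,e)`, the top
`t` of the stack with its edge `e(t,u)` forms an adjacent nest around `e(k,e)`, so the algorithm
does not match `k` with `t`. Otherwise flipping such a nest is a valid type 2 move, because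
`P d = comp (P a)` and `P c = comp (P b) = P a`. -/

variable {n : ℕ} {T : Finset (ℕ × ℕ)} {a b c d : ℕ}

theorem IsMatching.eq_of_touch (hM : IsMatching n T) {p q : ℕ × ℕ} {m : ℕ} (hp : p ∈ T)
    (hq : q ∈ T) (hpm : p.1 = m ∨ p.2 = m) (hqm : q.1 = m ∨ q.2 = m) : p = q := by
  have := hM.1 p hp
  obtain ⟨r, -, hr⟩ := hM.2 m (by omega)
  rw [hr p ⟨hp, hpm⟩, hr q ⟨hq, hqm⟩]

theorem IsMatching.disjoint (hM : IsMatching n T) {p q : ℕ × ℕ} (hp : p ∈ T) (hq : q ∈ T)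
    (hpq : p ≠ q) : p.1 ≠ q.1 ∧ p.1 ≠ q.2 ∧ p.2 ≠ q.1 ∧ p.2 ≠ q.2 := by
  refine ⟨fun h => hpq ?_, fun h => hpq ?_, fun h => hpq ?_, fun h => hpq ?_⟩ <;>
    exact hM.eq_of_touch hp hq (by tauto) (by tauto)

theorem IsMatching.right_unique (hM : IsMatching n T) {x y z : ℕ} (h₁ : (x, z) ∈ T)
    (h₂ : (y, z) ∈ T) : x = y :=
  congrArg Prod.fst (hM.eq_of_touch h₁ h₂ (Or.inr rfl) (Or.inr rfl))

theorem IsMatching.left_unique (hM : IsMatching n T) {x y z : ℕ} (h₁ : (x, y) ∈ T)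
    (h₂ : (x, z) ∈ T) : y = z :=
  congrArg Prod.snd (hM.eq_of_touch h₁ h₂ (Or.inl rfl) (Or.inl rfl))

theorem IsMatching.not_mem_of_right (hM : IsMatching n T) {x y z : ℕ} (h : (x, y) ∈ T) :
    (y, z) ∉ T := fun h' => by
  have hxy : x = y := congrArg Prod.fst (hM.eq_of_touch h h' (Or.inr rfl) (Or.inl rfl))
  exact (hM.1 _ h).1.ne hxy

def type2Flip (T : Finset (ℕ × ℕ)) (a b c d : ℕ) : Finset (ℕ × ℕ) :=
  insert (a, b) (insert (c, d) ((T.erase (a, d)).erase (b, c)))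

theorem mem_type2Flip {p : ℕ × ℕ} : p ∈ type2Flip T a b c d ↔
    p = (a, b) ∨ p = (c, d) ∨ (p ∈ T ∧ p ≠ (a, d) ∧ p ≠ (b, c)) := by
  simp only [type2Flip, Finset.mem_insert, Finset.mem_erase]
  tauto

structure IsAdjacentNest (T : Finset (ℕ × ℕ)) (a b c d : ℕ) : Prop where
  lt_ab : a < b
  lt_bc : b < c
  lt_cd : c < d
  outer_mem : (a, d) ∈ T
  inner_mem : (b, c) ∈ T
  adjacent : ¬ ∃ q ∈ T, a < q.1 ∧ q.1 < b ∧ c < q.2 ∧ q.2 < d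

theorem IsAdjacentNest.type2Move (h : IsAdjacentNest T a b c d) :
    Type2Move T (type2Flip T a b c d) :=
  ⟨a, b, c, d, h.lt_ab, h.lt_bc, h.lt_cd, h.outer_mem, h.inner_mem, h.adjacent, rfl⟩

theorem IsMatching.type2Flip (hM : IsMatching n T) (hab : a < b) (hbc : b < c) (hcd : c < d)
    (had : (a, d) ∈ T) (hbc' : (b, c) ∈ T) : IsMatching n (type2Flip T a b c d) := by
  have hd := (hM.1 _ had).2
  refine ⟨fun p hp => ?_, fun m hm => existsUnique_of_exists_of_unique ?_ ?_⟩
  · rcases mem_type2Flip.1 hp with rfl | rfl | ⟨hp, -, -⟩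
    · exact ⟨hab, by omega⟩
    · exact ⟨hcd, hd⟩
    · exact hM.1 p hp
  · obtain ⟨r, ⟨hr, hrm⟩, -⟩ := hM.2 m hm
    by_cases h₁ : r = (a, d)
    · subst h₁
      rcases hrm with rfl | rfl
      · exact ⟨(a, b), mem_type2Flip.2 (Or.inl rfl), Or.inl rfl⟩
      · exact ⟨(c, d), mem_type2Flip.2 (Or.inr (Or.inl rfl)), Or.inr rfl⟩
    by_cases h₂ : r = (b, c)
    · subst h₂
      rcases hrm with rfl | rfl
      · exact ⟨(a, b), mem_type2Flip.2 (Or.inl rfl), Or.inr rfl⟩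
      · exact ⟨(c, d), mem_type2Flip.2 (Or.inr (Or.inl rfl)), Or.inl rfl⟩
    exact ⟨r, mem_type2Flip.2 (Or.inr (Or.inr ⟨hr, h₁, h₂⟩)), hrm⟩
  · have fresh : ∀ r ∈ T, r ≠ (a, d) → r ≠ (b, c) →
        r.1 ≠ a ∧ r.1 ≠ b ∧ r.1 ≠ c ∧ r.1 ≠ d ∧ r.2 ≠ a ∧ r.2 ≠ b ∧ r.2 ≠ c ∧ r.2 ≠ d := by
      intro r hr h₁ h₂
      have := hM.disjoint hr had h₁
      have := hM.disjoint hr hbc' h₂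
      dsimp only at *
      omega
    rintro p q ⟨hp, hpm⟩ ⟨hq, hqm⟩
    rcases mem_type2Flip.1 hp with rfl | rfl | ⟨hp, hp₁, hp₂⟩ <;>
      rcases mem_type2Flip.1 hq with rfl | rfl | ⟨hq, hq₁, hq₂⟩
    all_goals first
      | rfl
      | exact hM.eq_of_touch hp hq hpm hqm
      | (dsimp only at hpm hqm; omega)
      | (have := fresh _ hq hq₁ hq₂; dsimp only at hpm; omega)
      | (have := fresh _ hp hp₁ hp₂; dsimp only at hqm; omega)

theorem NonCrossing.type2Flip (hM : IsMatching n T) (hnc : NonCrossing T)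
    (h : IsAdjacentNest T a b c d) : NonCrossing (type2Flip T a b c d) := by
  have old : ∀ r ∈ T, r ≠ (a, d) → r ≠ (b, c) →
      ¬ (a < r.1 ∧ r.1 < b ∧ b < r.2) ∧ ¬ (r.1 < a ∧ a < r.2 ∧ r.2 < b) ∧
      ¬ (c < r.1 ∧ r.1 < d ∧ d < r.2) ∧ ¬ (r.1 < c ∧ c < r.2 ∧ r.2 < d) := by
    intro r hr h₁ h₂
    have := hM.disjoint hr h.outer_mem h₁
    have := hM.disjoint hr h.inner_mem h₂
    have : ¬ (r.1 < a ∧ a < r.2 ∧ r.2 < d) := hnc r hr _ h.outer_mem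
    have : ¬ (a < r.1 ∧ r.1 < d ∧ d < r.2) := hnc _ h.outer_mem r hr
    have : ¬ (r.1 < b ∧ b < r.2 ∧ r.2 < c) := hnc r hr _ h.inner_mem
    have : ¬ (b < r.1 ∧ r.1 < c ∧ c < r.2) := hnc _ h.inner_mem r hr
    have := h.lt_ab; have := h.lt_bc; have := h.lt_cd
    dsimp only at *
    refine ⟨?_, ?_, ?_, ?_⟩ <;> rintro ⟨_, _, _⟩ <;>
      exact h.adjacent ⟨r, hr, by omega, by omega, by omega, by omega⟩
  intro p hp q hq
  rcases mem_type2Flip.1 hp with rfl | rfl | ⟨hp, hp₁, hp₂⟩ <;>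
    rcases mem_type2Flip.1 hq with rfl | rfl | ⟨hq, hq₁, hq₂⟩
  all_goals first
    | exact hnc p hp q hq
    | (have := h.lt_bc; dsimp only; omega)
    | (have := old _ hq hq₁ hq₂; dsimp only; tauto)
    | (have := old _ hp hp₁ hp₂; dsimp only; tauto)

theorem IsPlaneTree.type2Flip (hT : IsPlaneTree n T) (h : IsAdjacentNest T a b c d) :
    IsPlaneTree n (type2Flip T a b c d) :=
  ⟨hT.1.type2Flip h.lt_ab h.lt_bc h.lt_cd h.outer_mem h.inner_mem, hT.2.type2Flip hT.1 h⟩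

theorem IsValid.type2Flip {A : Type*} {P : ℕ → A} {comp : A → A}
    (hinv : Function.Involutive comp) (hval : IsValid P comp T) (had : (a, d) ∈ T)
    (hbc : (b, c) ∈ T) (hP : P b = comp (P a)) : IsValid P comp (type2Flip T a b c d) := by
  intro p hp
  rcases mem_type2Flip.1 hp with rfl | rfl | ⟨hp, -, -⟩
  · exact hP
  · have hd : P d = comp (P a) := hval _ had
    have hc : P c = comp (P b) := hval _ hbc
    change P d = comp (P c)
    rw [hd, hc, hP, hinv]
  · exact hval p hp

section Greedy

variable {A : Type*} [DecidableEq A] {P : ℕ → A} {comp : A → A} {k : ℕ}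

theorem greedy_succ_of_push
    (h : ∀ j rest, (greedy P comp k).1 = j :: rest → P k ≠ comp (P j)) :
    greedy P comp (k + 1) = (k :: (greedy P comp k).1, (greedy P comp k).2) := by
  rw [greedy]
  split
  next hs => rw [hs]
  next j rest hs => rw [hs, if_neg (h j rest hs)]

theorem greedy_succ_of_pop {j : ℕ} {rest : List ℕ} (hs : (greedy P comp k).1 = j :: rest)
    (hP : P k = comp (P j)) :
    greedy P comp (k + 1) = (rest, (j, k) :: (greedy P comp k).2) := by
  rw [greedy]
  split
  next hs' => simp [hs] at hs'
  next j' rest' hs' =>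
    obtain ⟨rfl, rfl⟩ := List.cons.inj (hs.symm.trans hs')
    rw [if_pos hP]

/-- The state `s` of the greedy algorithm after reading positions `0,…,k-1`, as predicted by `T`:
the edges of `T` closed so far, and the stack of left ends of the edges still open, topmost
(largest) first. -/
structure GreedyAgrees (T : Finset (ℕ × ℕ)) (k : ℕ) (s : List ℕ × List (ℕ × ℕ)) : Prop where
  mem_matched : ∀ x y, (x, y) ∈ s.2 ↔ (x, y) ∈ T ∧ y < k
  mem_stack : ∀ x, x ∈ s.1 ↔ x < k ∧ ∃ e, (x, e) ∈ T ∧ k ≤ e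
  stack_sorted : s.1.Pairwise (· > ·)

namespace GreedyAgrees

variable {s : List ℕ × List (ℕ × ℕ)}

theorem zero : GreedyAgrees T 0 ([], []) :=
  ⟨by simp, by simp, List.Pairwise.nil⟩

theorem push (h : GreedyAgrees T k s) (hT : IsMatching n T) {e : ℕ} (hke : (k, e) ∈ T) :
    GreedyAgrees T (k + 1) (k :: s.1, s.2) where
  mem_matched x y := by
    rw [h.mem_matched]
    refine ⟨fun ⟨hxy, hy⟩ => ⟨hxy, by omega⟩, fun ⟨hxy, hy⟩ => ⟨hxy, ?_⟩⟩
    have : y ≠ k := by rintro rfl; exact hT.not_mem_of_right hxy hke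
    omega
  mem_stack x := by
    rw [List.mem_cons, h.mem_stack]
    constructor
    · rintro (rfl | ⟨hx, e', hxe, he'⟩)
      · exact ⟨by omega, e, hke, (hT.1 _ hke).1⟩
      · have : e' ≠ k := by rintro rfl; exact hT.not_mem_of_right hxe hke
        exact ⟨by omega, e', hxe, by omega⟩
    · rintro ⟨hx, e', hxe, he'⟩
      rcases Nat.lt_succ_iff_lt_or_eq.1 hx with hx | rfl
      · exact Or.inr ⟨hx, e', hxe, by omega⟩
      · exact Or.inl rfl
  stack_sorted := List.pairwise_cons.2 ⟨fun x hx => ((h.mem_stack x).1 hx).1, h.stack_sorted⟩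

theorem pop (h : GreedyAgrees T k s) (hT : IsMatching n T) {x : ℕ} {rest : List ℕ}
    (hs : s.1 = x :: rest) (hxk : (x, k) ∈ T) :
    GreedyAgrees T (k + 1) (rest, (x, k) :: s.2) where
  mem_matched y z := by
    rw [List.mem_cons, h.mem_matched, Prod.mk.injEq]
    constructor
    · rintro (⟨rfl, rfl⟩ | ⟨hyz, hz⟩)
      · exact ⟨hxk, by omega⟩
      · exact ⟨hyz, by omega⟩
    · rintro ⟨hyz, hz⟩
      rcases Nat.lt_succ_iff_lt_or_eq.1 hz with hz | rfl
      · exact Or.inr ⟨hyz, hz⟩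
      · exact Or.inl ⟨hT.right_unique hyz hxk, rfl⟩
  mem_stack y := by
    have hsorted := h.stack_sorted
    rw [hs, List.pairwise_cons] at hsorted
    constructor
    · intro hy
      obtain ⟨hyk, e, hye, he⟩ := (h.mem_stack y).1 (hs ▸ List.mem_cons_of_mem x hy)
      have : e ≠ k := by rintro rfl; exact (hsorted.1 y hy).ne (hT.right_unique hye hxk)
      exact ⟨by omega, e, hye, by omega⟩
    · rintro ⟨hyk, e, hye, he⟩
      have hyk' : y ≠ k := by rintro rfl; exact hT.not_mem_of_right hxk hye
      have hyx : y ≠ x := by rintro rfl; have := hT.left_unique hye hxk; omega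
      have hy := (h.mem_stack y).2 ⟨by omega, e, hye, by omega⟩
      rw [hs, List.mem_cons] at hy
      exact hy.resolve_left hyx
  stack_sorted := by
    have hsorted := h.stack_sorted
    rw [hs] at hsorted
    exact hsorted.of_cons

theorem exists_stack_eq_cons_of_closing (h : GreedyAgrees T k s) (hT : IsPlaneTree n T)
    {x : ℕ} (hxk : (x, k) ∈ T) : ∃ rest, s.1 = x :: rest := by
  have hx : x ∈ s.1 := (h.mem_stack x).2 ⟨(hT.1.1 _ hxk).1, k, hxk, le_rfl⟩
  obtain ⟨t, rest, hs⟩ := List.exists_cons_of_ne_nil (List.ne_nil_of_mem hx)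
  rw [hs, List.mem_cons] at hx
  rcases hx with rfl | hx
  · exact ⟨rest, hs⟩
  · have hsorted := h.stack_sorted
    rw [hs, List.pairwise_cons] at hsorted
    obtain ⟨htk, u, htu, hu⟩ := (h.mem_stack t).1 (hs ▸ List.mem_cons_self ..)
    have : u ≠ k := by rintro rfl; exact (hsorted.1 x hx).ne (hT.1.right_unique hxk htu)
    exact absurd (hT.2 _ hxk _ htu) fun hcross => hcross ⟨hsorted.1 x hx, htk, by omega⟩

theorem exists_isAdjacentNest_of_opening (h : GreedyAgrees T k s) (hT : IsPlaneTree n T)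
    {e t : ℕ} {rest : List ℕ} (hke : (k, e) ∈ T) (hs : s.1 = t :: rest) :
    ∃ u, IsAdjacentNest T t k e u := by
  have hsorted := h.stack_sorted
  rw [hs, List.pairwise_cons] at hsorted
  obtain ⟨htk, u, htu, hu⟩ := (h.mem_stack t).1 (hs ▸ List.mem_cons_self ..)
  have hku : u ≠ k := by rintro rfl; exact hT.1.not_mem_of_right htu hke
  have heu : e ≠ u := by rintro rfl; have := hT.1.right_unique hke htu; omega
  have hke' : k < e := (hT.1.1 _ hke).1
  have hcross : ¬ (t < k ∧ k < u ∧ u < e) := hT.2 _ htu _ hke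
  refine ⟨u, htk, hke', by omega, htu, hke, ?_⟩
  rintro ⟨q, hq, htq, hqk, heq, hqu⟩
  have hqs := (h.mem_stack q.1).2 ⟨hqk, q.2, hq, by omega⟩
  rw [hs, List.mem_cons] at hqs
  rcases hqs with hqt | hqr
  · omega
  · exact absurd (hsorted.1 _ hqr) (by omega)

end GreedyAgrees

theorem greedyAgrees_greedy (hT : IsPlaneTree n T) (hval : IsValid P comp T)
    (hnest : ∀ a b c d, IsAdjacentNest T a b c d → P b ≠ comp (P a)) :
    ∀ k ≤ 2 * n, GreedyAgrees T k (greedy P comp k)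
  | 0, _ => GreedyAgrees.zero
  | k + 1, hk => by
    have h := greedyAgrees_greedy hT hval hnest k (by omega)
    obtain ⟨⟨x, y⟩, ⟨hxy, hx | hy⟩, -⟩ := hT.1.2 k (by omega)
    · obtain rfl : x = k := hx
      rw [greedy_succ_of_push fun t rest hs => ?_]
      · exact h.push hT.1 hxy
      obtain ⟨u, hnest'⟩ := h.exists_isAdjacentNest_of_opening hT hxy hs
      exact hnest _ _ _ _ hnest'
    · obtain rfl : y = k := hy
      obtain ⟨rest, hs⟩ := h.exists_stack_eq_cons_of_closing hT hxy
      rw [greedy_succ_of_pop hs (hval _ hxy)]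
      exact h.pop hT.1 hs hxy

theorem eq_greedyMatching (hT : IsPlaneTree n T) (hval : IsValid P comp T)
    (hnest : ∀ a b c d, IsAdjacentNest T a b c d → P b ≠ comp (P a)) :
    T = greedyMatching P comp n := by
  have h := greedyAgrees_greedy hT hval hnest (2 * n) le_rfl
  ext ⟨x, y⟩
  rw [greedyMatching, List.mem_toFinset, h.mem_matched]
  exact ⟨fun hxy => ⟨hxy, (hT.1.1 _ hxy).2⟩, And.left⟩

end Greedy

theorem non_greedy_tree_has_type2_move_general {A : Type*} [DecidableEq A]
    (comp : A → A) (hinv : Function.Involutive comp)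
    (n : ℕ) (P : ℕ → A) (T : Finset (ℕ × ℕ))
    (hT : IsPlaneTree n T) (hval : IsValid P comp T)
    (hne : T ≠ greedyMatching P comp n) :
    ∃ T', IsPlaneTree n T' ∧ ValidType2Move P comp T T' := by
  by_contra hmove
  refine hne (eq_greedyMatching hT hval fun a b c d hnest hP => hmove ?_)
  exact ⟨type2Flip T a b c d, hT.type2Flip hnest, hnest.type2Move, hval,
    hval.type2Flip hinv hnest.outer_mem hnest.inner_mem hP⟩

/-- Every `P`-valid plane tree other than the greedy tree `T₀`
admits a valid local move of type 2. -/
theorem non_greedy_tree_has_type2_move {A : Type*} [DecidableEq A]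
    (comp : A → A) (hinv : Function.Involutive comp) (hff : ∀ a, comp a ≠ a)
    (n : ℕ) (P : ℕ → A) (T : Finset (ℕ × ℕ))
    (hT : IsPlaneTree n T) (hval : IsValid P comp T)
    (hne : T ≠ greedyMatching P comp n) :
    ∃ T', IsPlaneTree n T' ∧ ValidType2Move P comp T T' :=
  non_greedy_tree_has_type2_move_general comp hinv n P T hT hval hne
end

section
/- Fix a word P over a complementary alphabet. The graph G_P whose vertices are the P-valid plane trees and whose edges connect trees differing by a single valid local move is connected. -/
/-!
Induct on the number of edges of `T` missing from `S`, and pick such an edge `(x, y)` of minimal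
length. Every point strictly between `x` and `y` is matched by `T` through a shorter edge nested
in `(x, y)`, which is therefore an edge of `S` too; so `S` matches those points among themselves.
Hence the `S`-edges at `x` and `y`, say `{x, a}` and `{y, b}`, are either nested with `x` and `y`
consecutive endpoints, or side by side with `x` and `y` as their inner endpoints, and one local
move (of type 2, resp. type 1) replaces them by `(x, y)` and `{a, b}`. The new edge `{a, b}` is
valid because `comp` is an involution and `x ~ a`, `y ~ b`, `x ~ y`. All other edges of `S`
survive, so `T \ S` shrinks.
-/

section

variable {A : Type*} {P : ℕ → A} {comp : A → A} {n : ℕ} {M S T : Finset (ℕ × ℕ)}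

namespace IsMatching

lemma eq_of_mem (hM : IsMatching n M) {p q : ℕ × ℕ} (hp : p ∈ M) (hq : q ∈ M) {k : ℕ}
    (hpk : p.1 = k ∨ p.2 = k) (hqk : q.1 = k ∨ q.2 = k) : p = q := by
  have hk : k < 2 * n := by have := hM.1 p hp; omega
  exact (hM.2 k hk).unique ⟨hp, hpk⟩ ⟨hq, hqk⟩

lemma exists_mem (hM : IsMatching n M) {k : ℕ} (hk : k < 2 * n) :
    ∃ p ∈ M, p.1 = k ∨ p.2 = k :=
  (hM.2 k hk).exists

lemma eq_of_subset (hS : IsMatching n S) (hT : IsMatching n T) (hTS : T ⊆ S) : T = S := by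
  refine hTS.antisymm fun r hr => ?_
  have := hS.1 r hr
  obtain ⟨t, ht, htr⟩ := hT.exists_mem (k := r.1) (by omega)
  rwa [← hS.eq_of_mem (hTS ht) hr htr (.inl rfl)]

lemma swap (hM : IsMatching n M) {p q e f : ℕ × ℕ} (hp : p ∈ M) (hq : q ∈ M)
    (he : e.1 < e.2) (hf : f.1 < f.2) (hef : e.1 ≠ f.1 ∧ e.1 ≠ f.2 ∧ e.2 ≠ f.1 ∧ e.2 ≠ f.2)
    (hcov : ∀ k, (e.1 = k ∨ e.2 = k ∨ f.1 = k ∨ f.2 = k) ↔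
      (p.1 = k ∨ p.2 = k ∨ q.1 = k ∨ q.2 = k)) :
    IsMatching n (insert e (insert f ((M.erase p).erase q))) := by
  have hbound : ∀ k, (e.1 = k ∨ e.2 = k ∨ f.1 = k ∨ f.2 = k) → k < 2 * n := fun k hk => by
    have := hM.1 p hp; have := hM.1 q hq; have := (hcov k).1 hk; omega
  have hrest : ∀ r ∈ (M.erase p).erase q, r ∈ M ∧
      ∀ k, (e.1 = k ∨ e.2 = k ∨ f.1 = k ∨ f.2 = k) → ¬(r.1 = k ∨ r.2 = k) := by
    simp only [Finset.mem_erase]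
    rintro r ⟨hrq, hrp, hr⟩
    refine ⟨hr, fun k hk hrk => ?_⟩
    rcases (hcov k).1 hk with h | h | h | h
    · exact hrp (hM.eq_of_mem hr hp hrk (.inl h))
    · exact hrp (hM.eq_of_mem hr hp hrk (.inr h))
    · exact hrq (hM.eq_of_mem hr hq hrk (.inl h))
    · exact hrq (hM.eq_of_mem hr hq hrk (.inr h))
  refine ⟨?_, fun k hk => ?_⟩
  · simp only [Finset.mem_insert]
    rintro r (rfl | rfl | hr)
    · exact ⟨he, hbound _ (by simp)⟩
    · exact ⟨hf, hbound _ (by simp)⟩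
    · exact hM.1 r (hrest r hr).1
  simp only [Finset.mem_insert]
  by_cases hke : e.1 = k ∨ e.2 = k
  · refine ⟨e, ⟨.inl rfl, hke⟩, ?_⟩
    rintro r ⟨rfl | rfl | hr, hrk⟩
    · rfl
    · omega
    · exact ((hrest r hr).2 k (by omega) hrk).elim
  by_cases hkf : f.1 = k ∨ f.2 = k
  · refine ⟨f, ⟨.inr (.inl rfl), hkf⟩, ?_⟩
    rintro r ⟨rfl | rfl | hr, hrk⟩
    · omega
    · rfl
    · exact ((hrest r hr).2 k (by omega) hrk).elim
  obtain ⟨r, ⟨hr, hrk⟩, hru⟩ := hM.2 k hk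
  have hpq : ¬(p.1 = k ∨ p.2 = k ∨ q.1 = k ∨ q.2 = k) := fun h => by
    have := (hcov k).2 h; omega
  refine ⟨r, ⟨.inr (.inr ?_), hrk⟩, ?_⟩
  · simp only [Finset.mem_erase]
    refine ⟨?_, ?_, hr⟩ <;> rintro rfl <;> omega
  · rintro s ⟨rfl | rfl | hs, hsk⟩
    · omega
    · omega
    · exact hru s ⟨(hrest s hs).1, hsk⟩

end IsMatching

def Crosses (p q : ℕ × ℕ) : Prop :=
  p.1 < q.1 ∧ q.1 < p.2 ∧ p.2 < q.2

def NestedOrDisjoint (p q : ℕ × ℕ) : Prop :=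
  p.2 < q.1 ∨ q.2 < p.1 ∨ (p.1 < q.1 ∧ q.2 < p.2) ∨ (q.1 < p.1 ∧ p.2 < q.2)

lemma NonCrossing.mono (hM : NonCrossing M) (h : S ⊆ M) : NonCrossing S :=
  fun p hp q hq => hM p (h hp) q (h hq)

lemma NonCrossing.insert (hM : NonCrossing M) {e : ℕ × ℕ}
    (he : ∀ r ∈ M, ¬Crosses e r ∧ ¬Crosses r e) : NonCrossing (insert e M) := by
  simp only [NonCrossing, Finset.mem_insert]
  rintro p (rfl | hp) q (rfl | hq)
  · exact fun h => lt_asymm h.1 h.1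
  · exact (he q hq).1
  · exact (he p hp).2
  · exact hM p hp q hq

namespace IsPlaneTree

lemma nestedOrDisjoint (hM : IsPlaneTree n M) {p q : ℕ × ℕ} (hp : p ∈ M) (hq : q ∈ M)
    (hpq : p ≠ q) : NestedOrDisjoint p q := by
  have hdisj : ∀ k, (p.1 = k ∨ p.2 = k) → ¬(q.1 = k ∨ q.2 = k) :=
    fun k hpk hqk => hpq (hM.1.eq_of_mem hp hq hpk hqk)
  have := hdisj _ (.inl rfl); have := hdisj _ (.inr rfl)
  have := hM.1.1 p hp; have := hM.1.1 q hq; have := hM.2 p hp q hq; have := hM.2 q hq p hp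
  unfold NestedOrDisjoint
  omega

lemma nestedOrDisjoint_of_mem_erase_erase (hM : IsPlaneTree n M) {p q r : ℕ × ℕ}
    (hp : p ∈ M) (hq : q ∈ M) (hr : r ∈ (M.erase p).erase q) :
    r ∈ M ∧ r.1 < r.2 ∧ NestedOrDisjoint r p ∧ NestedOrDisjoint r q := by
  obtain ⟨hrq, hrp, hrM⟩ : r ≠ q ∧ r ≠ p ∧ r ∈ M := by simpa only [Finset.mem_erase] using hr
  exact ⟨hrM, (hM.1.1 r hrM).1, hM.nestedOrDisjoint hrM hp hrp, hM.nestedOrDisjoint hrM hq hrq⟩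

lemma swap (hM : IsPlaneTree n M) {p q e f : ℕ × ℕ} (hp : p ∈ M) (hq : q ∈ M)
    (he : e.1 < e.2) (hf : f.1 < f.2) (hef : e.1 ≠ f.1 ∧ e.1 ≠ f.2 ∧ e.2 ≠ f.1 ∧ e.2 ≠ f.2)
    (hcov : ∀ k, (e.1 = k ∨ e.2 = k ∨ f.1 = k ∨ f.2 = k) ↔
      (p.1 = k ∨ p.2 = k ∨ q.1 = k ∨ q.2 = k))
    (hcross : ¬Crosses e f ∧ ¬Crosses f e)
    (hrest : ∀ r ∈ (M.erase p).erase q,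
      ¬Crosses e r ∧ ¬Crosses r e ∧ ¬Crosses f r ∧ ¬Crosses r f) :
    IsPlaneTree n (insert e (insert f ((M.erase p).erase q))) := by
  refine ⟨hM.1.swap hp hq he hf hef hcov, NonCrossing.insert ?_ ?_⟩
  · exact (hM.2.mono ((Finset.erase_subset _ _).trans (Finset.erase_subset _ _))).insert
      fun r hr => ⟨(hrest r hr).2.2.1, (hrest r hr).2.2.2⟩
  · simp only [Finset.forall_mem_insert]
    exact ⟨hcross, fun r hr => ⟨(hrest r hr).1, (hrest r hr).2.1⟩⟩

end IsPlaneTree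

lemma IsValid.swap (hM : IsValid P comp M) {p q : ℕ × ℕ} {e₁ e₂ f₁ f₂ : ℕ}
    (he : P e₂ = comp (P e₁)) (hf : P f₂ = comp (P f₁)) :
    IsValid P comp (insert (e₁, e₂) (insert (f₁, f₂) ((M.erase p).erase q))) := by
  simp only [IsValid, Finset.forall_mem_insert]
  exact ⟨he, hf, fun r hr => hM r (Finset.mem_of_mem_erase (Finset.mem_of_mem_erase hr))⟩

def ClosedBetween (S : Finset (ℕ × ℕ)) (x y : ℕ) : Prop :=
  ∀ r ∈ S, (x < r.1 ∧ r.1 < y) ∨ (x < r.2 ∧ r.2 < y) → x < r.1 ∧ r.2 < y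

lemma closedBetween_of_subset {x y : ℕ} (hS : IsMatching n S) (hT : IsPlaneTree n T)
    (hxy : (x, y) ∈ T) (hsub : ∀ t ∈ T, x < t.1 → t.2 < y → t ∈ S) : ClosedBetween S x y := by
  intro r hr hin
  obtain ⟨k, hrk, hxk, hky⟩ : ∃ k, (r.1 = k ∨ r.2 = k) ∧ x < k ∧ k < y := by
    rcases hin with h | h
    exacts [⟨_, .inl rfl, h⟩, ⟨_, .inr rfl, h⟩]
  have hxy_lt := hT.1.1 _ hxy
  obtain ⟨t, ht, htk⟩ := hT.1.exists_mem (k := k) (by omega)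
  have htxy : t ≠ (x, y) := by rintro rfl; omega
  have hnest := hT.nestedOrDisjoint ht hxy htxy
  have ht_lt := hT.1.1 t ht
  unfold NestedOrDisjoint at hnest
  have hinside : x < t.1 ∧ t.2 < y := by omega
  rw [hS.eq_of_mem hr (hsub t ht hinside.1 hinside.2) hrk htk]
  exact hinside

def TreeGraphAdj (n : ℕ) (P : ℕ → A) (comp : A → A) (X Y : Finset (ℕ × ℕ)) : Prop :=
  IsPlaneTree n X ∧ IsPlaneTree n Y ∧ (ValidType2Move P comp X Y ∨ ValidType2Move P comp Y X)

lemma TreeGraphAdj.isValid_right (h : TreeGraphAdj n P comp S T) : IsValid P comp T :=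
  h.2.2.elim (fun h => h.2.2) (fun h => h.2.1)

section LocalMove

variable {x y a b : ℕ}

lemma exists_adj_of_nested_left (hinv : Function.Involutive comp) (hS : IsPlaneTree n S)
    (hval : IsValid P comp S) (hcomp : P y = comp (P x)) (hcl : ClosedBetween S x y)
    (hxa : (x, a) ∈ S) (hyb : (y, b) ∈ S) (hord : x < y ∧ y < b ∧ b < a) :
    ∃ S', TreeGraphAdj n P comp S S' ∧ (x, y) ∈ S' ∧ (S.erase (x, a)).erase (y, b) ⊆ S' := by
  have hS' : IsPlaneTree n (insert (x, y) (insert (b, a) ((S.erase (x, a)).erase (y, b)))) := by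
    refine hS.swap hxa hyb (by omega) (by omega) (by omega) (fun k => by omega)
      (by unfold Crosses; omega) fun r hr => ?_
    obtain ⟨hrS, hr, hrp, hrq⟩ := hS.nestedOrDisjoint_of_mem_erase_erase hxa hyb hr
    have := hcl r hrS
    unfold Crosses; unfold NestedOrDisjoint at hrp hrq
    omega
  have hPab : P a = comp (P b) := by
    rw [show P a = comp (P x) from hval _ hxa, show P b = comp (P y) from hval _ hyb, hinv, hcomp]
  refine ⟨_, ⟨hS, hS', .inl ⟨⟨x, y, b, a, hord.1, hord.2.1, hord.2.2, hxa, hyb, ?_, rfl⟩,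
    hval, ?_⟩⟩, by simp, fun r hr => by simp [hr]⟩
  · rintro ⟨r, hr, h⟩
    have := hcl r hr
    omega
  · exact hval.swap hcomp hPab

lemma exists_adj_of_nested_right (hinv : Function.Involutive comp) (hS : IsPlaneTree n S)
    (hval : IsValid P comp S) (hcomp : P y = comp (P x)) (hcl : ClosedBetween S x y)
    (hby : (b, y) ∈ S) (hax : (a, x) ∈ S) (hord : b < a ∧ a < x ∧ x < y) :
    ∃ S', TreeGraphAdj n P comp S S' ∧ (x, y) ∈ S' ∧ (S.erase (b, y)).erase (a, x) ⊆ S' := by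
  have hS' : IsPlaneTree n (insert (b, a) (insert (x, y) ((S.erase (b, y)).erase (a, x)))) := by
    refine hS.swap hby hax (by omega) (by omega) (by omega) (fun k => by omega)
      (by unfold Crosses; omega) fun r hr => ?_
    obtain ⟨hrS, hr, hrp, hrq⟩ := hS.nestedOrDisjoint_of_mem_erase_erase hby hax hr
    have := hcl r hrS
    unfold Crosses; unfold NestedOrDisjoint at hrp hrq
    omega
  have hPab : P a = comp (P b) := by
    rw [← hinv (P a), ← show P x = comp (P a) from hval _ hax, ← hcomp]
    exact hval _ hby
  refine ⟨_, ⟨hS, hS', .inl ⟨⟨b, a, x, y, hord.1, hord.2.1, hord.2.2, hby, hax, ?_, rfl⟩,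
    hval, ?_⟩⟩, by simp, fun r hr => by simp [hr]⟩
  · rintro ⟨r, hr, h⟩
    have := hcl r hr
    omega
  · exact hval.swap hPab hcomp

lemma exists_adj_of_side_by_side (hinv : Function.Involutive comp) (hS : IsPlaneTree n S)
    (hval : IsValid P comp S) (hcomp : P y = comp (P x)) (hcl : ClosedBetween S x y)
    (hxyS : (x, y) ∉ S) (hax : (a, x) ∈ S) (hyb : (y, b) ∈ S) (hord : a < x ∧ x < y ∧ y < b) :
    ∃ S', TreeGraphAdj n P comp S S' ∧ (x, y) ∈ S' ∧ (S.erase (a, x)).erase (y, b) ⊆ S' := by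
  set R := (S.erase (a, x)).erase (y, b) with hR
  have hS' : IsPlaneTree n (insert (a, b) (insert (x, y) R)) := by
    refine hS.swap hax hyb (by omega) (by omega) (by omega) (fun k => by omega)
      (by unfold Crosses; omega) fun r hr => ?_
    obtain ⟨hrS, hr, hrp, hrq⟩ := hS.nestedOrDisjoint_of_mem_erase_erase hax hyb hr
    have := hcl r hrS
    unfold Crosses; unfold NestedOrDisjoint at hrp hrq
    omega
  have hPab : P b = comp (P a) := by
    rw [show P b = comp (P y) from hval _ hyb, hcomp, hinv]
    exact hval _ hax
  have habR : (a, b) ∉ insert (x, y) R := by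
    simp only [Finset.mem_insert, Prod.mk.injEq, hR, Finset.mem_erase, not_or]
    refine ⟨by omega, fun ⟨_, _, hab⟩ => ?_⟩
    have := hS.1.eq_of_mem hab hax (.inl rfl) (.inl rfl)
    simp only [Prod.mk.injEq] at this
    omega
  have hxyR : (x, y) ∉ R := fun h => hxyS (Finset.mem_of_mem_erase (Finset.mem_of_mem_erase h))
  have hback : S = insert (a, x) (insert (y, b)
      (((insert (a, b) (insert (x, y) R)).erase (a, b)).erase (x, y))) := by
    rw [Finset.erase_insert habR, Finset.erase_insert hxyR, hR, Finset.insert_erase,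
      Finset.insert_erase hax]
    exact Finset.mem_erase.2 ⟨by simp only [ne_eq, Prod.mk.injEq]; omega, hyb⟩
  refine ⟨_, ⟨hS, hS', .inr ⟨⟨a, x, y, b, hord.1, hord.2.1, hord.2.2, by simp, by simp, ?_,
    hback⟩, ?_, hval⟩⟩, by simp, fun r hr => by simp [hr]⟩
  · simp only [Finset.mem_insert]
    rintro ⟨r, rfl | rfl | hr, h⟩
    · exact lt_irrefl a h.1
    · exact lt_irrefl x h.2.1
    obtain ⟨-, hr, hrp, -⟩ := hS.nestedOrDisjoint_of_mem_erase_erase hax hyb hr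
    unfold NestedOrDisjoint at hrp
    omega
  · exact hval.swap hPab hcomp

lemma exists_adj_mem_of_closedBetween (hinv : Function.Involutive comp) (hS : IsPlaneTree n S)
    (hval : IsValid P comp S) (hxy : x < y) (hy : y < 2 * n) (hcomp : P y = comp (P x))
    (hcl : ClosedBetween S x y) (hxyS : (x, y) ∉ S) :
    ∃ S', TreeGraphAdj n P comp S S' ∧ (x, y) ∈ S' ∧
      ∀ r ∈ S, r ∉ S' → (r.1 = x ∨ r.2 = x) ∨ (r.1 = y ∨ r.2 = y) := by
  obtain ⟨⟨u₁, u₂⟩, hu, hux : u₁ = x ∨ u₂ = x⟩ := hS.1.exists_mem (k := x) (by omega)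
  obtain ⟨⟨v₁, v₂⟩, hv, hvy : v₁ = y ∨ v₂ = y⟩ := hS.1.exists_mem hy
  have hkeep : ∀ S', (S.erase (u₁, u₂)).erase (v₁, v₂) ⊆ S' →
      ∀ r ∈ S, r ∉ S' → (r.1 = x ∨ r.2 = x) ∨ (r.1 = y ∨ r.2 = y) := by
    intro S' hsub r hr hr'
    by_cases hru : r = (u₁, u₂)
    · exact .inl (hru ▸ hux)
    by_cases hrv : r = (v₁, v₂)
    · exact .inr (hrv ▸ hvy)
    exact absurd (hsub (by simp [hr, hru, hrv])) hr'
  have hne : (u₁, u₂) ≠ (v₁, v₂) := by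
    rintro ⟨⟩
    have := hS.1.1 _ hu
    obtain ⟨rfl, rfl⟩ : u₁ = x ∧ u₂ = y := by omega
    exact hxyS hu
  have hlam := hS.nestedOrDisjoint hu hv hne
  have hu₁₂ := (hS.1.1 _ hu).1
  have hv₁₂ := (hS.1.1 _ hv).1
  have hclu := hcl _ hu
  have hclv := hcl _ hv
  unfold NestedOrDisjoint at hlam
  rcases hux with rfl | rfl <;> rcases hvy with rfl | rfl
  · obtain ⟨S', hadj, hmem, hsub⟩ :=
      exists_adj_of_nested_left hinv hS hval hcomp hcl hu hv (by omega)
    exact ⟨S', hadj, hmem, hkeep S' hsub⟩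
  · omega
  · obtain ⟨S', hadj, hmem, hsub⟩ :=
      exists_adj_of_side_by_side hinv hS hval hcomp hcl hxyS hu hv (by omega)
    exact ⟨S', hadj, hmem, hkeep S' hsub⟩
  · obtain ⟨S', hadj, hmem, hsub⟩ :=
      exists_adj_of_nested_right hinv hS hval hcomp hcl hv hu (by omega)
    exact ⟨S', hadj, hmem, hkeep S' (Finset.erase_right_comm (s := S) ▸ hsub)⟩

end LocalMove

lemma exists_adj_sdiff_ssubset (hinv : Function.Involutive comp) (hS : IsPlaneTree n S)
    (hSval : IsValid P comp S) (hT : IsPlaneTree n T) (hTval : IsValid P comp T)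
    (hne : (T \ S).Nonempty) : ∃ S', TreeGraphAdj n P comp S S' ∧ T \ S' ⊂ T \ S := by
  obtain ⟨⟨x, y⟩, hxy, hmin⟩ := Finset.exists_min_image (T \ S) (fun t => t.2 - t.1) hne
  obtain ⟨hxyT, hxyS⟩ := Finset.mem_sdiff.1 hxy
  have hxy_lt := hT.1.1 _ hxyT
  have hcl : ClosedBetween S x y := closedBetween_of_subset hS.1 hT hxyT fun t ht h₁ h₂ => by
    by_contra htS
    have := hmin t (Finset.mem_sdiff.2 ⟨ht, htS⟩)
    have := hT.1.1 t ht
    omega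
  obtain ⟨S', hadj, hmem, hkeep⟩ :=
    exists_adj_mem_of_closedBetween hinv hS hSval hxy_lt.1 hxy_lt.2 (hTval _ hxyT) hcl hxyS
  refine ⟨S', hadj, (Finset.ssubset_iff_of_subset fun t ht => ?_).2
    ⟨(x, y), hxy, fun h => (Finset.mem_sdiff.1 h).2 hmem⟩⟩
  obtain ⟨htT, htS'⟩ := Finset.mem_sdiff.1 ht
  refine Finset.mem_sdiff.2 ⟨htT, fun htS => htS' ?_⟩
  rcases hkeep t htS htS' with h | h
  · rwa [hT.1.eq_of_mem htT hxyT h (.inl rfl)]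
  · rwa [hT.1.eq_of_mem htT hxyT h (.inr rfl)]

end

theorem valid_tree_graph_connected_general {A : Type*}
    (comp : A → A) (hinv : Function.Involutive comp)
    (n : ℕ) (P : ℕ → A) (S T : Finset (ℕ × ℕ))
    (hS : IsPlaneTree n S) (hSval : IsValid P comp S)
    (hT : IsPlaneTree n T) (hTval : IsValid P comp T) :
    Relation.ReflTransGen
      (fun X Y => IsPlaneTree n X ∧ IsPlaneTree n Y ∧
        (ValidType2Move P comp X Y ∨ ValidType2Move P comp Y X)) S T := by
  induction hk : (T \ S).card using Nat.strong_induction_on generalizing S with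
  | _ k ih =>
    rcases (T \ S).eq_empty_or_nonempty with h | h
    · rw [hS.1.eq_of_subset hT.1 (Finset.sdiff_eq_empty_iff_subset.1 h)]
    · obtain ⟨S', hadj, hlt⟩ := exists_adj_sdiff_ssubset hinv hS hSval hT hTval h
      exact .head hadj (ih _ (hk ▸ Finset.card_lt_card hlt) S' hadj.2.1 hadj.isValid_right rfl)

/-- The graph `G_P`, whose vertices are the `P`-valid plane trees
and whose edges are valid local moves (a type 1 move is the inverse of a type 2
move, so an undirected edge joins `X` and `Y` iff a valid type 2 move goes one
way or the other), is connected. -/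
theorem valid_tree_graph_connected {A : Type*}
    (comp : A → A) (hinv : Function.Involutive comp) (hff : ∀ a, comp a ≠ a)
    (n : ℕ) (P : ℕ → A) (S T : Finset (ℕ × ℕ))
    (hS : IsPlaneTree n S) (hSval : IsValid P comp S)
    (hT : IsPlaneTree n T) (hTval : IsValid P comp T) :
    Relation.ReflTransGen
      (fun X Y => IsPlaneTree n X ∧ IsPlaneTree n Y ∧
        (ValidType2Move P comp X Y ∨ ValidType2Move P comp Y X)) S T :=
  valid_tree_graph_connected_general comp hinv n P S T hS hSval hT hTval
end

section
/- Every type 2 local move strictly decreases the total distance statistic d_T = Σ_{v ∈ T} dist(v, root) of a plane tree; consequently the directed graph G_P^+ (vertices the P-valid plane trees, edges the valid type 2 local moves) has no directed cycles. -/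
/-- The total-distance statistic `d_T = ∑_{v ∈ T} dist(v, root)`: in the
matching model each edge `p` contributes `1 +` (the number of edges strictly
containing `p`), since the lower endpoint of an edge at nesting depth `d` is at
distance `d + 1` from the root. -/
def totalDepth (M : Finset (ℕ × ℕ)) : ℕ :=
  M.card + ∑ p ∈ M, (M.filter (fun q => q.1 < p.1 ∧ p.2 < q.2)).card

/-!
A type 2 move replaces the nested edges `e(i,j') ⊃ e(j,i')` by the siblings `e(i,j)`, `e(i',j')`.
Since the tree is non-crossing, every edge enclosing one of the new edges already enclosed
`e(i,j')`, so both new edges are at most as deep as `e(i,j')`, which is strictly shallower than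
`e(j,i')`. Any other edge is enclosed by at most one of the two disjoint new edges, and then also
by `e(i,j')`, so its depth does not grow. Hence `d_T` drops strictly, and a strictly decreasing
natural-number potential admits no directed cycle.
-/

open Finset

def Encloses (r p : ℕ × ℕ) : Prop :=
  r.1 < p.1 ∧ p.2 < r.2

instance : DecidableRel Encloses := fun _ _ => inferInstanceAs (Decidable (_ ∧ _))

lemma Encloses.irrefl (p : ℕ × ℕ) : ¬ Encloses p p :=
  fun h => lt_irrefl _ h.1

lemma Encloses.trans {p q r : ℕ × ℕ} (hrq : Encloses r q) (hqp : Encloses q p) :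
    Encloses r p :=
  ⟨hrq.1.trans hqp.1, hqp.2.trans hrq.2⟩

def depth (M : Finset (ℕ × ℕ)) (p : ℕ × ℕ) : ℕ :=
  #(M.filter (Encloses · p))

lemma totalDepth_eq_sum (M : Finset (ℕ × ℕ)) : totalDepth M = ∑ p ∈ M, (depth M p + 1) := by
  rw [sum_add_distrib, ← card_eq_sum_ones, add_comm]
  rfl

lemma depth_eq_sum (M : Finset (ℕ × ℕ)) (p : ℕ × ℕ) :
    depth M p = ∑ r ∈ M, if Encloses r p then 1 else 0 :=
  card_filter _ _

lemma depth_lt_depth_of_encloses {M : Finset (ℕ × ℕ)} {p q : ℕ × ℕ} (hq : q ∈ M)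
    (hqp : Encloses q p) : depth M q < depth M p := by
  have hsub : M.filter (Encloses · q) ⊆ M.filter (Encloses · p) :=
    fun r hr => mem_filter.2 ⟨(mem_filter.1 hr).1, (mem_filter.1 hr).2.trans hqp⟩
  refine card_lt_card ((ssubset_iff_of_subset hsub).2 ⟨q, ?_, ?_⟩)
  · exact mem_filter.2 ⟨hq, hqp⟩
  · exact fun h => Encloses.irrefl q (mem_filter.1 h).2

lemma depth_le_depth_of_forall {M M' : Finset (ℕ × ℕ)} {p p' : ℕ × ℕ}
    (h : ∀ r ∈ M', Encloses r p' → r ∈ M ∧ Encloses r p) : depth M' p' ≤ depth M p :=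
  card_le_card fun r hr =>
    have hr := mem_filter.1 hr
    mem_filter.2 (h r hr.1 hr.2)

lemma Finset.sum_eq_add_add_sum_erase_erase {ι M : Type*} [DecidableEq ι] [AddCommMonoid M]
    {s : Finset ι} {a b : ι} (f : ι → M) (ha : a ∈ s) (hb : b ∈ s) (hab : a ≠ b) :
    ∑ x ∈ s, f x = f a + f b + ∑ x ∈ (s.erase a).erase b, f x := by
  rw [← add_sum_erase s f ha, ← add_sum_erase _ f (mem_erase.2 ⟨hab.symm, hb⟩), add_assoc]

lemma Finset.sum_insert_insert {ι M : Type*} [DecidableEq ι] [AddCommMonoid M]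
    {s : Finset ι} {a b : ι} (f : ι → M) (ha : a ∉ s) (hb : b ∉ s) (hab : a ≠ b) :
    ∑ x ∈ insert a (insert b s), f x = f a + f b + ∑ x ∈ s, f x := by
  rw [sum_insert (by simp [hab, ha]), sum_insert hb, add_assoc]

lemma IsMatching.eq_of_endpoint {n k : ℕ} {M : Finset (ℕ × ℕ)} (hM : IsMatching n M)
    {p q : ℕ × ℕ} (hp : p ∈ M) (hq : q ∈ M) (hpk : p.1 = k ∨ p.2 = k)
    (hqk : q.1 = k ∨ q.2 = k) : p = q := by
  have hk : k < 2 * n := by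
    obtain ⟨hp12, hp2⟩ := hM.1 p hp
    rcases hpk with rfl | rfl <;> omega
  obtain ⟨_, -, huniq⟩ := hM.2 k hk
  exact (huniq p ⟨hp, hpk⟩).trans (huniq q ⟨hq, hqk⟩).symm

namespace IsPlaneTree

variable {n : ℕ} {M : Finset (ℕ × ℕ)} {p r : ℕ × ℕ}

lemma encloses_of_fst_mem_Ioo (hM : IsPlaneTree n M) (hp : p ∈ M) (hr : r ∈ M)
    (h₁ : r.1 < p.1) (h₂ : p.1 < r.2) : Encloses r p := by
  refine ⟨h₁, ?_⟩
  rcases lt_trichotomy p.2 r.2 with h | h | h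
  · exact h
  · obtain rfl := hM.1.eq_of_endpoint hr hp (Or.inr h.symm) (Or.inr rfl)
    exact absurd h₁ (lt_irrefl _)
  · exact absurd ⟨h₁, h₂, h⟩ (hM.2 r hr p hp)

lemma encloses_of_snd_mem_Ioo (hM : IsPlaneTree n M) (hp : p ∈ M) (hr : r ∈ M)
    (h₁ : r.1 < p.2) (h₂ : p.2 < r.2) : Encloses r p := by
  refine ⟨?_, h₂⟩
  rcases lt_trichotomy r.1 p.1 with h | h | h
  · exact h
  · obtain rfl := hM.1.eq_of_endpoint hr hp (Or.inl h) (Or.inl rfl)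
    exact absurd h₂ (lt_irrefl _)
  · exact absurd ⟨h, h₁, h₂⟩ (hM.2 p hp r hr)

end IsPlaneTree

def applyType2 (M : Finset (ℕ × ℕ)) (i j i' j' : ℕ) : Finset (ℕ × ℕ) :=
  insert (i, j) (insert (i', j') ((M.erase (i, j')).erase (j, i')))

section Type2

variable {n i j i' j' : ℕ} {M : Finset (ℕ × ℕ)}

lemma mem_of_mem_applyType2 {r : ℕ × ℕ} (hr : r ∈ applyType2 M i j i' j') :
    r = (i, j) ∨ r = (i', j') ∨ r ∈ M := by
  simp only [applyType2, mem_insert] at hr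
  exact hr.imp_right (Or.imp_right fun h => mem_of_mem_erase (mem_of_mem_erase h))

lemma sum_applyType2 (hM : IsPlaneTree n M) (hij : i < j) (hji' : j < i') (hi'j' : i' < j')
    (hA : (i, j') ∈ M) (hB : (j, i') ∈ M) (f : ℕ × ℕ → ℕ) :
    ∑ p ∈ applyType2 M i j i' j', f p
      = f (i, j) + f (i', j') + ∑ p ∈ (M.erase (i, j')).erase (j, i'), f p := by
  have hC : (i, j) ∉ M := fun h => by
    have := hM.1.eq_of_endpoint h hA (Or.inl rfl) (Or.inl rfl)
    simp only [Prod.mk.injEq] at this; omega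
  have hD : (i', j') ∉ M := fun h => by
    have := hM.1.eq_of_endpoint h hB (Or.inl rfl) (Or.inr rfl)
    simp only [Prod.mk.injEq] at this; omega
  have hCD : (i, j) ≠ (i', j') := by simp only [ne_eq, Prod.mk.injEq]; omega
  exact sum_insert_insert f (fun h => hC (mem_of_mem_erase (mem_of_mem_erase h)))
    (fun h => hD (mem_of_mem_erase (mem_of_mem_erase h))) hCD

lemma depth_applyType2_left_le (hM : IsPlaneTree n M) (hij : i < j) (hji' : j < i')
    (hA : (i, j') ∈ M) : depth (applyType2 M i j i' j') (i, j) ≤ depth M (i, j') := by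
  refine depth_le_depth_of_forall fun r hr hrC => ?_
  obtain ⟨hr₁, hr₂⟩ := hrC
  rcases mem_of_mem_applyType2 hr with rfl | rfl | hrM
  · exact absurd hr₁ (lt_irrefl i)
  · exact absurd hr₁ (by dsimp only; omega)
  · exact ⟨hrM, hM.encloses_of_fst_mem_Ioo hA hrM hr₁ (hij.trans hr₂)⟩

lemma depth_applyType2_right_le (hM : IsPlaneTree n M) (hji' : j < i') (hi'j' : i' < j')
    (hA : (i, j') ∈ M) : depth (applyType2 M i j i' j') (i', j') ≤ depth M (i, j') := by
  refine depth_le_depth_of_forall fun r hr hrD => ?_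
  obtain ⟨hr₁, hr₂⟩ := hrD
  rcases mem_of_mem_applyType2 hr with rfl | rfl | hrM
  · exact absurd hr₂ (by dsimp only; omega)
  · exact absurd hr₁ (lt_irrefl i')
  · exact ⟨hrM, hM.encloses_of_snd_mem_Ioo hA hrM (hr₁.trans hi'j') hr₂⟩

/-- The two new edges are disjoint and both lie inside `e(i,j')`. -/
lemma ite_encloses_add_ite_encloses_le (hij : i < j) (hji' : j < i') (hi'j' : i' < j')
    {q : ℕ × ℕ} (hq : q.1 ≤ q.2) :
    ((if Encloses (i, j) q then 1 else 0) + if Encloses (i', j') q then 1 else 0)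
      ≤ if Encloses (i, j') q then 1 else 0 := by
  split_ifs <;> simp only [Encloses] at * <;> omega

lemma depth_applyType2_le (hM : IsPlaneTree n M) (hij : i < j) (hji' : j < i') (hi'j' : i' < j')
    (hA : (i, j') ∈ M) (hB : (j, i') ∈ M) {q : ℕ × ℕ} (hq : q.1 ≤ q.2) :
    depth (applyType2 M i j i' j') q ≤ depth M q := by
  have hAB : (i, j') ≠ (j, i') := by simp only [ne_eq, Prod.mk.injEq]; omega
  rw [depth_eq_sum, depth_eq_sum, sum_applyType2 hM hij hji' hi'j' hA hB,
    sum_eq_add_add_sum_erase_erase _ hA hB hAB]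
  have := ite_encloses_add_ite_encloses_le hij hji' hi'j' hq
  omega

lemma totalDepth_applyType2_lt (hM : IsPlaneTree n M) (hij : i < j) (hji' : j < i')
    (hi'j' : i' < j') (hA : (i, j') ∈ M) (hB : (j, i') ∈ M) :
    totalDepth (applyType2 M i j i' j') < totalDepth M := by
  have hAB : (i, j') ≠ (j, i') := by simp only [ne_eq, Prod.mk.injEq]; omega
  rw [totalDepth_eq_sum, totalDepth_eq_sum, sum_applyType2 hM hij hji' hi'j' hA hB,
    sum_eq_add_add_sum_erase_erase _ hA hB hAB]
  have hC := depth_applyType2_left_le hM hij hji' hA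
  have hD := depth_applyType2_right_le hM hji' hi'j' hA
  have hAB_depth := depth_lt_depth_of_encloses (p := (j, i')) hA ⟨hij, hi'j'⟩
  have hrest : ∑ q ∈ (M.erase (i, j')).erase (j, i'), (depth (applyType2 M i j i' j') q + 1)
      ≤ ∑ q ∈ (M.erase (i, j')).erase (j, i'), (depth M q + 1) :=
    sum_le_sum fun q hq => Nat.add_le_add_right (depth_applyType2_le hM hij hji' hi'j' hA hB
      (hM.1.1 q (mem_of_mem_erase (mem_of_mem_erase hq))).1.le) 1
  omega

end Type2

lemma Type2Move.totalDepth_lt {n : ℕ} {M M' : Finset (ℕ × ℕ)} (hM : IsPlaneTree n M)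
    (h : Type2Move M M') : totalDepth M' < totalDepth M := by
  obtain ⟨i, j, i', j', hij, hji', hi'j', hA, hB, -, rfl⟩ := h
  exact totalDepth_applyType2_lt hM hij hji' hi'j' hA hB

theorem type2_decreases_totalDepth_and_acyclic_general {A : Type*}
    (comp : A → A)
    (n : ℕ) (P : ℕ → A) :
    (∀ M M' : Finset (ℕ × ℕ), IsPlaneTree n M → Type2Move M M' →
      totalDepth M' < totalDepth M) ∧
    (¬ ∃ M : Finset (ℕ × ℕ), IsPlaneTree n M ∧ IsValid P comp M ∧
      Relation.TransGen
        (fun X Y => IsPlaneTree n X ∧ IsPlaneTree n Y ∧ ValidType2Move P comp X Y)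
        M M) := by
  refine ⟨fun M M' hM h => h.totalDepth_lt hM, ?_⟩
  rintro ⟨M, -, -, hcycle⟩
  have hlt : Relation.TransGen (· > ·) (totalDepth M) (totalDepth M) :=
    hcycle.lift totalDepth fun X Y h => h.2.2.1.totalDepth_lt h.1
  rw [Relation.transGen_eq_self] at hlt
  exact lt_irrefl _ hlt

/-- Every type 2 local move strictly decreases the total distance
statistic `d_T`; consequently the directed graph `G_P⁺` of valid type 2 moves
on `P`-valid plane trees has no directed cycles. -/
theorem type2_decreases_totalDepth_and_acyclic {A : Type*}
    (comp : A → A) (hinv : Function.Involutive comp) (hff : ∀ a, comp a ≠ a)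
    (n : ℕ) (P : ℕ → A) :
    (∀ M M' : Finset (ℕ × ℕ), IsPlaneTree n M → Type2Move M M' →
      totalDepth M' < totalDepth M) ∧
    (¬ ∃ M : Finset (ℕ × ℕ), IsPlaneTree n M ∧ IsValid P comp M ∧
      Relation.TransGen
        (fun X Y => IsPlaneTree n X ∧ IsPlaneTree n Y ∧ ValidType2Move P comp X Y)
        M M) :=
  type2_decreases_totalDepth_and_acyclic_general comp n P
end

section
/- For 1 ≤ a ≤ n−1, the product of Catalan numbers C_a · C_{n−a} is at most C_1 · C_{n−1} = C_{n−1}, with the maximum attained at a = 1 and a = n−1. -/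
lemma catalan_mul_le_aux : ∀ a b : ℕ, 1 ≤ a → 1 ≤ b →
    catalan a * catalan b ≤ catalan (a + b - 1) := by
  intro a
  induction a using Nat.strong_induction_on with
  | _ a ih =>
    intro b ha hb
    rcases Nat.lt_or_ge a 2 with h2 | h2
    · interval_cases a
      have : 1 + b - 1 = b := by omega
      rw [this, catalan_one, one_mul]
    · obtain ⟨a', rfl⟩ : ∃ a', a = a' + 1 := ⟨a - 1, by omega⟩
      have ha' : 1 ≤ a' := by omega
      have hgoal : a' + 1 + b - 1 = a' + b := by omega
      rw [hgoal]
      -- RHS expansion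
      have hR : catalan (a' + b) =
          ∑ i ∈ Finset.range (a' + b), catalan i * catalan (a' + b - 1 - i) := by
        obtain ⟨m, hm⟩ : ∃ m, a' + b = m + 1 := ⟨a' + b - 1, by omega⟩
        rw [hm, catalan_succ, Fin.sum_univ_eq_sum_range (fun i => catalan i * catalan (m - i))]
        simp
      -- LHS expansion
      have hL : catalan (a' + 1) * catalan b =
          ∑ i ∈ Finset.range (a' + 1), catalan i * catalan (a' - i) * catalan b := by
        rw [catalan_succ, Fin.sum_univ_eq_sum_range (fun i => catalan i * catalan (a' - i)),
          Finset.sum_mul]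
      rw [hL, hR, Finset.sum_range_succ]
      -- bound the i < a' part termwise
      have step1 : ∑ i ∈ Finset.range a', catalan i * catalan (a' - i) * catalan b ≤
          ∑ i ∈ Finset.range a', catalan i * catalan (a' + b - 1 - i) := by
        apply Finset.sum_le_sum
        intro i hi
        have hi' : i < a' := Finset.mem_range.mp hi
        have key := ih (a' - i) (by omega) b (by omega) hb
        have heq : a' - i + b - 1 = a' + b - 1 - i := by omega
        rw [heq] at key
        calc catalan i * catalan (a' - i) * catalan b
            = catalan i * (catalan (a' - i) * catalan b) := by ring
          _ ≤ catalan i * catalan (a' + b - 1 - i) := Nat.mul_le_mul_left _ key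
      -- bound last term: C_{a'} * C_0 * C_b <= C_{a'+b-1}
      have step2 : catalan a' * catalan (a' - a') * catalan b ≤
          catalan (a' + b - 1) * catalan (a' + b - 1 - (a' + b - 1)) := by
        simp only [Nat.sub_self, catalan_zero, mul_one]
        exact ih a' (by omega) b ha' hb
      have hnotmem : a' + b - 1 ∉ Finset.range a' := by
        simp only [Finset.mem_range]; omega
      have hsubset : insert (a' + b - 1) (Finset.range a') ⊆ Finset.range (a' + b) := by
        intro x hx
        rcases Finset.mem_insert.mp hx with rfl | hx
        · exact Finset.mem_range.mpr (by omega)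
        · have := Finset.mem_range.mp hx
          exact Finset.mem_range.mpr (by omega)
      calc ∑ i ∈ Finset.range a', catalan i * catalan (a' - i) * catalan b
            + catalan a' * catalan (a' - a') * catalan b
          ≤ ∑ i ∈ Finset.range a', catalan i * catalan (a' + b - 1 - i)
            + catalan (a' + b - 1) * catalan (a' + b - 1 - (a' + b - 1)) :=
            add_le_add step1 step2
        _ = ∑ i ∈ insert (a' + b - 1) (Finset.range a'),
              catalan i * catalan (a' + b - 1 - i) := by
            rw [Finset.sum_insert hnotmem, add_comm]
        _ ≤ ∑ i ∈ Finset.range (a' + b), catalan i * catalan (a' + b - 1 - i) :=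
            Finset.sum_le_sum_of_subset hsubset

/-- For `1 ≤ a ≤ n-1`, the product `C_a · C_{n-a}` of Catalan
numbers is at most `C_1 · C_{n-1} = C_{n-1}`, with the maximum attained at
`a = 1` and `a = n-1`. -/
theorem catalan_product_le (n : ℕ) (hn : 1 ≤ n) :
    (∀ a, 1 ≤ a → a ≤ n - 1 → catalan a * catalan (n - a) ≤ catalan (n - 1)) ∧
    catalan 1 * catalan (n - 1) = catalan (n - 1) ∧
    catalan (n - 1) * catalan (n - (n - 1)) = catalan (n - 1) := by
  refine ⟨?_, by simp [catalan_one], ?_⟩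
  · intro a ha han
    have h1 : 1 ≤ n - a := by omega
    have := catalan_mul_le_aux a (n - a) ha h1
    have heq : a + (n - a) - 1 = n - 1 := by omega
    rwa [heq] at this
  · have : n - (n - 1) = 1 := by omega
    rw [this, catalan_one, mul_one]
end

section
/- Fix m ≥ 1 and a complementary alphabet with 2m letters. The number |P(n,m)| of words of length 2n admitting at least one valid plane tree equals the sum over all compositions λ = (λ₁,...,λ_k) of n of (2m)^k · (2m−1)^{n−k} · ∏_{i=1}^{k} C_{λ_i − 1}, where C_j is the j-th Catalan number. -/
/-!
Model: a plane tree with n edges is encoded as a non-crossing perfect matching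
on the 2n half-edge positions `Fin (2*n)`; a matched pair (i,j) with i < j is
the edge e(i,j). A word of length 2n is a function `Fin (2*n) → A`.
-/

/-- `M` is a perfect matching on the positions `Fin (2*n)`. -/
def IsMatchingF (n : ℕ) (M : Finset (Fin (2 * n) × Fin (2 * n))) : Prop :=
  (∀ p ∈ M, p.1 < p.2) ∧ (∀ k : Fin (2 * n), ∃! p, p ∈ M ∧ (p.1 = k ∨ p.2 = k))

/-- No two matched pairs cross. -/
def NonCrossingF (n : ℕ) (M : Finset (Fin (2 * n) × Fin (2 * n))) : Prop :=
  ∀ p ∈ M, ∀ q ∈ M, ¬ (p.1 < q.1 ∧ q.1 < p.2 ∧ p.2 < q.2)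

/-- A plane tree on `n` edges: a non-crossing perfect matching. -/
def IsPlaneTreeF (n : ℕ) (M : Finset (Fin (2 * n) × Fin (2 * n))) : Prop :=
  IsMatchingF n M ∧ NonCrossingF n M

/-- The plane tree `M` is valid for the word `P` (with complementation `comp`):
every matched pair consists of complementary letters. -/
def IsValidF {A : Type*} (n : ℕ) (P : Fin (2 * n) → A) (comp : A → A)
    (M : Finset (Fin (2 * n) × Fin (2 * n))) : Prop :=
  ∀ p ∈ M, P p.2 = comp (P p.1)

/-!
A word is read left to right onto a stack, each letter cancelling a complementary letter on top.
A valid plane tree exists iff the stack ends empty: the shortest edge of a non-crossing perfect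
matching joins two adjacent complementary letters, and deleting that pair preserves both
properties. A balanced word splits uniquely at its first return to the empty stack as
`b y (comp b) v`, where the excursion `y` never pops `b` and `v` is balanced; excursions split in
the same way, except that their opening letters avoid the one letter that would pop the letter
below. Hence excursions of length `2t` number `(2m-1)^t C_t` by the Catalan recursion, a root
block of size `λ` contributes `2m (2m-1)^(λ-1) C_(λ-1)`, and summing over the block sizes gives
the sum over compositions of `n`.
-/

open Finset

theorem List.prod_map_mul_pow_sub_one_mul {M : Type*} [CommMonoid M] (x y : M) (f : ℕ → M)
    (l : List ℕ) (hl : ∀ a ∈ l, 1 ≤ a) :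
    (l.map fun a => x * (y ^ (a - 1) * f a)).prod =
      x ^ l.length * y ^ (l.sum - l.length) * (l.map f).prod := by
  induction l with
  | nil => simp
  | cons a l ih =>
    have ha := hl a List.mem_cons_self
    have hsum := List.length_le_sum_of_one_le l fun b hb => hl b (List.mem_cons_of_mem a hb)
    rw [List.map_cons, List.prod_cons, ih fun b hb => hl b (List.mem_cons_of_mem a hb),
      List.length_cons, List.sum_cons,
      show a + l.sum - (l.length + 1) = (a - 1) + (l.sum - l.length) by omega]
    rw [pow_succ, pow_add, List.map_cons, List.prod_cons]
    ac_rfl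

namespace Composition

def cons {n : ℕ} (i : Fin (n + 1)) (c : Composition (n - i)) : Composition (n + 1) where
  blocks := (i + 1) :: c.blocks
  blocks_pos := by
    intro a ha
    rcases List.mem_cons.1 ha with rfl | ha
    exacts [Nat.succ_pos _, c.blocks_pos ha]
  blocks_sum := by rw [List.sum_cons, c.blocks_sum]; omega

theorem cons_bijective (n : ℕ) :
    Function.Bijective fun x : Σ i : Fin (n + 1), Composition (n - i) => cons x.1 x.2 := by
  constructor
  · rintro ⟨i, c⟩ ⟨j, d⟩ h
    have hb := congrArg blocks h
    simp only [cons, List.cons.injEq, Nat.add_right_cancel_iff] at hb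
    obtain rfl : i = j := Fin.ext hb.1
    obtain rfl : c = d := Composition.ext hb.2
    rfl
  · intro c
    obtain ⟨a, l, hc⟩ := List.exists_cons_of_ne_nil
      (show c.blocks ≠ [] from fun h => by simpa [h] using c.blocks_sum)
    have ha : 0 < a := c.blocks_pos (hc ▸ List.mem_cons_self)
    have hsum : a + l.sum = n + 1 := by simpa [hc] using c.blocks_sum
    refine ⟨⟨⟨a - 1, by omega⟩,
      ⟨l, fun hb => c.blocks_pos (hc ▸ List.mem_cons_of_mem a hb), by simp only; omega⟩⟩,
      Composition.ext ?_⟩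
    simp only [cons, hc, List.cons.injEq, and_true]
    omega

theorem sum_prod_map_blocks_succ {R : Type*} [CommSemiring R] (g : ℕ → R) (n : ℕ) :
    ∑ c : Composition (n + 1), (c.blocks.map g).prod =
      ∑ p ∈ antidiagonal n, g (p.1 + 1) * ∑ c : Composition p.2, (c.blocks.map g).prod := by
  rw [← Fintype.sum_bijective _ (cons_bijective n) (fun x => ((cons x.1 x.2).blocks.map g).prod) _
    fun _ => rfl, Fintype.sum_sigma, Nat.sum_antidiagonal_eq_sum_range_succ_mk,
    ← Fin.sum_univ_eq_sum_range]
  simp [cons, mul_sum]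

theorem sum_prod_map_blocks_zero {R : Type*} [CommSemiring R] (g : ℕ → R) :
    ∑ c : Composition 0, (c.blocks.map g).prod = 1 := by
  have hnil : ∀ c : Composition 0, c.blocks = [] := fun c =>
    List.length_eq_zero_iff.1 (Nat.le_zero.1 c.length_le)
  simp [hnil, composition_card]

theorem eq_sum_prod_map_blocks {R : Type*} [CommSemiring R] {f g : ℕ → R} (h₀ : f 0 = 1)
    (hsucc : ∀ n, f (n + 1) = ∑ p ∈ antidiagonal n, g (p.1 + 1) * f p.2) (n : ℕ) :
    f n = ∑ c : Composition n, (c.blocks.map g).prod := by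
  induction n using Nat.strong_induction_on with
  | _ n ih =>
  cases n with
  | zero => rw [h₀, sum_prod_map_blocks_zero]
  | succ n =>
    rw [hsucc, sum_prod_map_blocks_succ]
    refine sum_congr rfl fun p hp => ?_
    rw [ih p.2 (by have := mem_antidiagonal.1 hp; omega)]

end Composition

namespace ComplementaryWord

variable {A : Type*} (comp : A → A)

open scoped Classical in
/-- Stacks are stored top first, so `stackFrom comp [] w` is the reversed free reduction of `w`. -/
noncomputable def push (S : List A) (a : A) : List A :=
  if S.head? = some (comp a) then S.tail else a :: S

noncomputable def stackFrom (S w : List A) : List A := w.foldl (push comp) S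

def IsReduced (S : List A) : Prop := S.IsChain fun x y => y ≠ comp x

variable {comp}

@[simp] theorem stackFrom_nil (S : List A) : stackFrom comp S [] = S := rfl

@[simp] theorem stackFrom_cons (S w : List A) (a : A) :
    stackFrom comp S (a :: w) = stackFrom comp (push comp S a) w := rfl

theorem stackFrom_append (S u v : List A) :
    stackFrom comp S (u ++ v) = stackFrom comp (stackFrom comp S u) v :=
  List.foldl_append

@[simp] theorem stackFrom_concat (S w : List A) (a : A) :
    stackFrom comp S (w ++ [a]) = push comp (stackFrom comp S w) a := by
  simp [stackFrom_append]

theorem push_of_head_ne {S : List A} {a : A} (h : S.head? ≠ some (comp a)) :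
    push comp S a = a :: S := if_neg h

theorem push_append {S : List A} (hS : S ≠ []) (L : List A) (a : A) :
    push comp (S ++ L) a = push comp S a ++ L := by
  obtain ⟨s, S, rfl⟩ := List.exists_cons_of_ne_nil hS
  unfold push
  split_ifs <;> simp_all

theorem push_eq_nil {S : List A} {a : A} (h : push comp S a = []) : S = [comp a] := by
  unfold push at h
  split_ifs at h with hS
  obtain ⟨S, rfl⟩ := List.head?_eq_some_iff.1 hS
  simp_all

theorem length_push_mod_two (S : List A) (a : A) :
    (push comp S a).length % 2 = (S.length + 1) % 2 := by
  unfold push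
  split_ifs with h
  · obtain ⟨S, rfl⟩ := List.head?_eq_some_iff.1 h
    simp; omega
  · simp

theorem length_stackFrom_add_length_mod_two (S w : List A) :
    ((stackFrom comp S w).length + w.length) % 2 = S.length % 2 := by
  induction w generalizing S with
  | nil => simp
  | cons a w ih =>
    have := length_push_mod_two (comp := comp) S a
    have := ih (push comp S a)
    simp only [stackFrom_cons, List.length_cons]
    omega

theorem even_length_of_stackFrom_eq {S w : List A} (h : stackFrom comp S w = S) :
    Even w.length := by
  have := length_stackFrom_add_length_mod_two (comp := comp) S w
  rw [h] at this
  exact Nat.even_iff.2 (by omega)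

theorem IsReduced.push {S : List A} (h : IsReduced comp S) (a : A) :
    IsReduced comp (push comp S a) := by
  unfold ComplementaryWord.push
  split_ifs with ha
  · exact h.tail
  · cases S with
    | nil => exact List.isChain_singleton a
    | cons s S => exact List.isChain_cons_cons.2 ⟨fun hs => ha (by simp [hs]), h⟩

theorem IsReduced.stackFrom {S : List A} (h : IsReduced comp S) (w : List A) :
    IsReduced comp (stackFrom comp S w) := by
  induction w generalizing S with
  | nil => exact h
  | cons a w ih => exact ih (h.push a)

theorem push_push_comp (hinv : Function.Involutive comp) {S : List A} (h : IsReduced comp S)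
    (a : A) : push comp (push comp S a) (comp a) = S := by
  unfold push
  by_cases ha : S.head? = some (comp a)
  · obtain ⟨S, rfl⟩ := List.head?_eq_some_iff.1 ha
    cases S with
    | nil => simp
    | cons t S => simp [(List.isChain_cons_cons.1 h).1]
  · simp [ha, hinv a]

theorem stackFrom_cancel (hinv : Function.Involutive comp) {S : List A} (h : IsReduced comp S)
    (x y : List A) (a : A) :
    stackFrom comp S (x ++ a :: comp a :: y) = stackFrom comp S (x ++ y) := by
  simp only [stackFrom_append, stackFrom_cons, push_push_comp hinv (h.stackFrom x)]

theorem stackFrom_nil_of_reduced (hinv : Function.Involutive comp) {w : List A}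
    (h : IsReduced comp w) : stackFrom comp [] w = w.reverse := by
  induction w using List.reverseRecOn with
  | nil => rfl
  | append_singleton w b ih =>
    rw [stackFrom_concat, ih (h.prefix (List.prefix_append w [b])), List.reverse_concat,
      push_of_head_ne]
    rw [List.head?_reverse]
    intro hw
    exact (List.isChain_append.1 h).2.2 _ hw b rfl (hinv b).symm

theorem exists_cancel_of_stackFrom_eq_nil (hinv : Function.Involutive comp) {w : List A}
    (hw : w ≠ []) (h : stackFrom comp [] w = []) : ∃ x a y, w = x ++ a :: comp a :: y := by
  by_cases hr : IsReduced comp w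
  · rw [stackFrom_nil_of_reduced hinv hr, List.reverse_eq_nil_iff] at h
    exact absurd h hw
  · obtain ⟨i, hi, hcomp⟩ : ∃ i, ∃ hi : i + 1 < w.length, w[i + 1] = comp w[i] := by
      simpa [IsReduced, List.isChain_iff_getElem] using hr
    refine ⟨w.take i, w[i], w.drop (i + 2), ?_⟩
    rw [← hcomp, List.getElem_cons_drop, List.getElem_cons_drop, List.take_append_drop]

variable (comp) in
def StaysAbove (L w : List A) : Prop := ∀ q, q <+: w → L <:+ stackFrom comp L q

variable (comp) in
def IsExcursion (L w : List A) : Prop := stackFrom comp L w = L ∧ StaysAbove comp L w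

theorem StaysAbove.of_prefix {L w q : List A} (h : StaysAbove comp L w) (hq : q <+: w) :
    StaysAbove comp L q :=
  fun r hr => h r (hr.trans hq)

theorem staysAbove_nil (L : List A) : StaysAbove comp L [] := by
  intro q hq
  rw [List.prefix_nil.1 hq]
  exact List.suffix_refl L

theorem isExcursion_nil_iff {w : List A} : IsExcursion comp [] w ↔ stackFrom comp [] w = [] :=
  ⟨And.left, fun h => ⟨h, fun _ _ => List.nil_suffix⟩⟩

theorem head_ne_of_suffix_push {L : List A} {c : A} (h : L <:+ push comp L c) :
    L.head? ≠ some (comp c) := by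
  intro hc
  obtain ⟨L, rfl⟩ := List.head?_eq_some_iff.1 hc
  have := h.length_le
  simp [push, hc] at this

theorem _root_.List.IsSuffix.push {L S : List A} (h : L <:+ S) (c : A) :
    L <:+ push comp S c ∨ push comp S c = L.tail := by
  obtain ⟨s, rfl⟩ := h
  cases s with
  | nil =>
    unfold ComplementaryWord.push
    split_ifs
    exacts [Or.inr rfl, Or.inl (List.suffix_cons c _)]
  | cons a s => exact Or.inl (push_append (List.cons_ne_nil a s) L c ▸ List.suffix_append _ L)

theorem stackFrom_append_of_staysAbove {S y : List A} (hS : S ≠ []) (h : StaysAbove comp S y)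
    (L : List A) : stackFrom comp (S ++ L) y = stackFrom comp S y ++ L := by
  induction y using List.reverseRecOn with
  | nil => rfl
  | append_singleton y c ih =>
    have hne : stackFrom comp S y ≠ [] := fun h0 =>
      hS (List.eq_nil_of_suffix_nil (h0 ▸ h y (List.prefix_append y [c])))
    rw [stackFrom_concat, stackFrom_concat, ih (h.of_prefix (List.prefix_append y [c])),
      push_append hne]

theorem staysAbove_append {L u v : List A} (hu : stackFrom comp L u = L) :
    StaysAbove comp L (u ++ v) ↔ StaysAbove comp L u ∧ StaysAbove comp L v := by
  refine ⟨fun h => ⟨h.of_prefix (List.prefix_append u v), fun q hq => ?_⟩,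
    fun ⟨hu', hv⟩ q hq => ?_⟩
  · simpa [stackFrom_append, hu] using h (u ++ q) ((List.prefix_append_right_inj u).2 hq)
  · rcases List.prefix_or_prefix_of_prefix hq (List.prefix_append u v) with hqu | ⟨r, rfl⟩
    · exact hu' q hqu
    · rw [stackFrom_append, hu]
      exact hv r ((List.prefix_append_right_inj u).1 hq)

theorem IsExcursion.append {L u v : List A} (hu : IsExcursion comp L u)
    (hv : IsExcursion comp L v) : IsExcursion comp L (u ++ v) :=
  ⟨by rw [stackFrom_append, hu.1, hv.1], (staysAbove_append hu.1).2 ⟨hu.2, hv.2⟩⟩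

theorem IsExcursion.of_append {L u v : List A} (hu : IsExcursion comp L u)
    (huv : IsExcursion comp L (u ++ v)) : IsExcursion comp L v :=
  ⟨by rw [← hu.1, ← stackFrom_append, huv.1, hu.1], ((staysAbove_append hu.1).1 huv.2).2⟩

theorem isExcursion_arch (hinv : Function.Involutive comp) {L y : List A} {b : A}
    (hb : L.head? ≠ some (comp b)) (hy : IsExcursion comp [b] y) :
    IsExcursion comp L (b :: y ++ [comp b]) := by
  have hstack : ∀ q, q <+: y → stackFrom comp L (b :: q) = stackFrom comp [b] q ++ L :=
    fun q hq => by
      rw [stackFrom_cons, push_of_head_ne hb]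
      exact stackFrom_append_of_staysAbove (List.cons_ne_nil b []) (hy.2.of_prefix hq) L
  have hreturn : stackFrom comp L (b :: y ++ [comp b]) = L := by
    rw [stackFrom_concat, hstack y (List.prefix_refl y), hy.1]
    simp [push, hinv b]
  refine ⟨hreturn, fun q hq => ?_⟩
  rcases List.prefix_cons_iff.1 hq with rfl | ⟨t, rfl, ht⟩
  · exact List.suffix_refl L
  rcases List.prefix_concat_iff.1 ht with rfl | ht
  · rw [← List.cons_append, hreturn]
  · rw [hstack t ht]
    exact List.suffix_append _ L

theorem StaysAbove.eq_nil_or_open_or_arch (hinv : Function.Involutive comp) {L p : List A}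
    (h : StaysAbove comp L p) :
    p = [] ∨
    (∃ b q, p = b :: q ∧ L.head? ≠ some (comp b) ∧ StaysAbove comp [b] q ∧
      stackFrom comp L p = stackFrom comp [b] q ++ L) ∨
    ∃ b y v, p = b :: y ++ comp b :: v ∧ L.head? ≠ some (comp b) ∧ IsExcursion comp [b] y ∧
      StaysAbove comp L v := by
  induction p using List.reverseRecOn with
  | nil => exact Or.inl rfl
  | append_singleton p c ih =>
    have hc := h (p ++ [c]) (List.prefix_refl _)
    rcases ih (h.of_prefix (List.prefix_append p [c])) with rfl | ⟨b, q, rfl, hb, hq, hpq⟩ |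
      ⟨b, y, v, rfl, hb, hy, hv⟩
    · have hb := head_ne_of_suffix_push hc
      refine Or.inr (Or.inl ⟨c, [], rfl, hb, staysAbove_nil [c], ?_⟩)
      simp [push_of_head_ne hb]
    · have hS := hq q (List.prefix_refl q)
      have hpush : stackFrom comp L (b :: q ++ [c]) = push comp (stackFrom comp [b] q) c ++ L := by
        rw [stackFrom_concat, hpq, push_append (fun h0 => by simp [h0] at hS)]
      rcases hS.push c with hS' | h0
      · refine Or.inr (Or.inl ⟨b, q ++ [c], rfl, hb, fun r hr => ?_,
          by rw [hpush, stackFrom_concat]⟩)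
        rcases List.prefix_concat_iff.1 hr with rfl | hr
        exacts [(stackFrom_concat _ _ _).symm ▸ hS', hq r hr]
      · have hq1 : stackFrom comp [b] q = [comp c] := push_eq_nil h0
        obtain rfl : c = comp b := by
          have := hS.eq_of_length (by simp [hq1])
          simp only [hq1, List.cons.injEq, and_true] at this
          rw [this, hinv]
        have hbq : stackFrom comp [b] q = [b] := by rw [hq1, hinv]
        exact Or.inr (Or.inr ⟨b, q, [], rfl, hb, ⟨hbq, hq⟩, staysAbove_nil L⟩)
    · refine Or.inr (Or.inr ⟨b, y, v ++ [c], by simp, hb, hy, ?_⟩)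
      have harch := isExcursion_arch hinv hb hy
      rw [show b :: y ++ comp b :: v ++ [c] = b :: y ++ [comp b] ++ (v ++ [c]) by simp,
        staysAbove_append harch.1] at h
      exact h.2

theorem isExcursion_iff (hinv : Function.Involutive comp) {L w : List A} :
    IsExcursion comp L w ↔ w = [] ∨ ∃ b y v, w = b :: y ++ comp b :: v ∧
      L.head? ≠ some (comp b) ∧ IsExcursion comp [b] y ∧ IsExcursion comp L v := by
  constructor
  · rintro ⟨hret, habove⟩
    rcases habove.eq_nil_or_open_or_arch hinv with rfl | ⟨b, q, rfl, -, hq, hstack⟩ |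
      ⟨b, y, v, rfl, hb, hy, -⟩
    · exact Or.inl rfl
    · have h1 := congrArg List.length (hret.symm.trans hstack)
      have h2 := (hq q (List.prefix_refl q)).length_le
      simp only [List.length_append, List.length_singleton] at h1 h2
      omega
    · have hsplit : b :: y ++ comp b :: v = b :: y ++ [comp b] ++ v := by simp
      rw [hsplit] at hret habove
      exact Or.inr ⟨b, y, v, rfl, hb, hy,
        (isExcursion_arch hinv hb hy).of_append ⟨hret, habove⟩⟩
  · rintro (rfl | ⟨b, y, v, rfl, hb, hy, hv⟩)
    · exact ⟨rfl, staysAbove_nil L⟩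
    · simpa using (isExcursion_arch hinv hb hy).append hv

theorem IsExcursion.not_append_comp_prefix (hinv : Function.Involutive comp) {b : A} {y y' : List A}
    (hy : IsExcursion comp [b] y) (hy' : IsExcursion comp [b] y') : ¬ y ++ [comp b] <+: y' := by
  intro h
  have := hy'.2 _ h
  simp [hy.1, push, hinv b] at this

theorem arch_injective (hinv : Function.Involutive comp) {b b' : A} {y y' v v' : List A}
    (hy : IsExcursion comp [b] y) (hy' : IsExcursion comp [b'] y')
    (h : b :: y ++ comp b :: v = b' :: y' ++ comp b' :: v') : b = b' ∧ y = y' ∧ v = v' := by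
  simp only [List.cons_append, List.cons.injEq] at h
  obtain ⟨rfl, h⟩ := h
  have hpre : ∀ {y₁ y₂ v₁ v₂ : List A}, y₁ ++ comp b :: v₁ = y₂ ++ comp b :: v₂ →
      y₁.length < y₂.length → y₁ ++ [comp b] <+: y₂ := fun h hlt =>
    List.prefix_of_prefix_length_le ⟨_, (List.append_cons _ _ _).symm⟩
      (by rw [h]; exact List.prefix_append _ _) (by simpa using hlt)
  rcases lt_trichotomy y.length y'.length with hlt | heq | hgt
  · exact absurd (hpre h hlt) (hy.not_append_comp_prefix hinv hy')
  · obtain ⟨rfl, hv⟩ := List.append_inj h heq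
    exact ⟨rfl, rfl, (List.cons.inj hv).2⟩
  · exact absurd (hpre h.symm hgt) (hy'.not_append_comp_prefix hinv hy)

section Counting

open scoped Classical

variable [Fintype A]

variable (A) in
noncomputable def words (ℓ : ℕ) : Finset (List A) :=
  univ.image (List.ofFn : (Fin ℓ → A) → List A)

theorem mem_words {ℓ : ℕ} {w : List A} : w ∈ words A ℓ ↔ w.length = ℓ := by
  simp only [words, mem_image, mem_univ, true_and]
  constructor
  · rintro ⟨f, rfl⟩
    exact List.length_ofFn
  · rintro rfl
    exact ⟨fun i => w[i], List.ofFn_getElem⟩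

variable (comp) in
noncomputable def excursions (L : List A) (t : ℕ) : Finset (List A) :=
  (words A (2 * t)).filter (IsExcursion comp L)

theorem mem_excursions {L w : List A} {t : ℕ} :
    w ∈ excursions comp L t ↔ w.length = 2 * t ∧ IsExcursion comp L w := by
  rw [excursions, mem_filter, mem_words]

theorem ncard_setOf_ofFn (p : List A → Prop) [DecidablePred p] (ℓ : ℕ) :
    {P : Fin ℓ → A | p (List.ofFn P)}.ncard = ((words A ℓ).filter p).card := by
  rw [← Set.ncard_image_of_injective _ List.ofFn_injective, ← Set.ncard_coe_finset]
  congr 1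
  ext w
  simp only [Set.mem_image, Set.mem_ofPred_eq, coe_filter, words, mem_image, mem_univ, true_and]
  constructor
  · rintro ⟨P, hP, rfl⟩
    exact ⟨⟨P, rfl⟩, hP⟩
  · rintro ⟨⟨P, rfl⟩, hP⟩
    exact ⟨P, hP, rfl⟩

theorem card_excursions_nil (n : ℕ) : (excursions comp [] n).card =
    {P : Fin (2 * n) → A | stackFrom comp [] (List.ofFn P) = []}.ncard := by
  rw [ncard_setOf_ofFn (fun w => stackFrom comp [] w = []), excursions]
  exact congrArg card (filter_congr fun w _ => isExcursion_nil_iff)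

theorem excursions_zero (L : List A) : excursions comp L 0 = {[]} := by
  ext w
  rw [mem_excursions, mem_singleton, Nat.mul_zero, List.length_eq_zero_iff]
  refine ⟨And.left, ?_⟩
  rintro rfl
  exact ⟨rfl, rfl, staysAbove_nil L⟩

theorem card_excursions_succ (hinv : Function.Involutive comp) (L : List A) (t : ℕ) :
    (excursions comp L (t + 1)).card =
      ∑ p ∈ antidiagonal t, ∑ b ∈ univ.filter (fun b => L.head? ≠ some (comp b)),
        (excursions comp [b] p.1).card * (excursions comp L p.2).card := by
  set D := (antidiagonal t).sigma fun p =>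
    (univ.filter fun b => L.head? ≠ some (comp b)).sigma fun b =>
      excursions comp [b] p.1 ×ˢ excursions comp L p.2
  let arch : (Σ _ : ℕ × ℕ, Σ _ : A, List A × List A) → List A :=
    fun x => x.2.1 :: x.2.2.1 ++ comp x.2.1 :: x.2.2.2
  have hD : ∀ {p : ℕ × ℕ} {b : A} {y v : List A},
      (⟨p, b, y, v⟩ : Σ _ : ℕ × ℕ, Σ _ : A, List A × List A) ∈ D ↔
        p.1 + p.2 = t ∧ L.head? ≠ some (comp b) ∧ (y.length = 2 * p.1 ∧ IsExcursion comp [b] y) ∧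
          (v.length = 2 * p.2 ∧ IsExcursion comp L v) := by
    simp [D, mem_excursions]
  have himage : excursions comp L (t + 1) = D.image arch := by
    ext w
    rw [mem_excursions, mem_image, isExcursion_iff hinv]
    constructor
    · rintro ⟨hlen, rfl | ⟨b, y, v, rfl, hb, hy, hv⟩⟩
      · simp at hlen
      obtain ⟨i, hi⟩ := even_length_of_stackFrom_eq hy.1
      obtain ⟨j, hj⟩ := even_length_of_stackFrom_eq hv.1
      refine ⟨⟨(i, j), b, y, v⟩, hD.2 ⟨?_, hb, ⟨by omega, hy⟩, ⟨by omega, hv⟩⟩, rfl⟩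
      simp at hlen
      omega
    · rintro ⟨⟨p, b, y, v⟩, hx, rfl⟩
      obtain ⟨hp, hb, ⟨hy, hy'⟩, ⟨hv, hv'⟩⟩ := hD.1 hx
      exact ⟨by simp [arch]; omega, Or.inr ⟨b, y, v, rfl, hb, hy', hv'⟩⟩
  have hinj : Set.InjOn arch D := by
    rintro ⟨p, b, y, v⟩ hx ⟨p', b', y', v'⟩ hx' h
    obtain ⟨hp, -, ⟨hy, hy'⟩, -⟩ := hD.1 hx
    obtain ⟨hp', -, ⟨hyy, hyy'⟩, -⟩ := hD.1 hx'
    obtain ⟨rfl, rfl, rfl⟩ := arch_injective hinv hy' hyy' h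
    obtain rfl : p = p' := Prod.ext (by omega) (by omega)
    rfl
  rw [himage, card_image_of_injOn hinj, card_sigma]
  simp only [card_sigma, card_product]

variable {m : ℕ}

theorem card_excursions_singleton (hinv : Function.Involutive comp)
    (hcard : Fintype.card A = 2 * m) (t : ℕ) (x : A) :
    (excursions comp [x] t).card = (2 * m - 1) ^ t * catalan t := by
  induction t using Nat.strong_induction_on generalizing x with
  | _ t ih =>
  cases t with
  | zero => simp [excursions_zero]
  | succ t =>
    have hopen : univ.filter (fun b => ([x] : List A).head? ≠ some (comp b)) =
        univ.erase (comp x) := by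
      ext b
      simp [eq_comm (a := x), hinv.eq_iff]
    have hfilter : (univ.filter fun b => ([x] : List A).head? ≠ some (comp b)).card =
        2 * m - 1 := by
      rw [hopen, card_erase_of_mem (mem_univ _), card_univ, hcard]
    rw [card_excursions_succ hinv, catalan_succ', mul_sum]
    refine sum_congr rfl fun p hp => ?_
    rw [HasAntidiagonal.mem_antidiagonal] at hp
    simp only [ih p.1 (by omega), ih p.2 (by omega), sum_const, hfilter, smul_eq_mul]
    rw [← hp, pow_succ, pow_add]
    ring

theorem card_excursions_nil_succ (hinv : Function.Involutive comp)
    (hcard : Fintype.card A = 2 * m) (t : ℕ) :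
    (excursions comp [] (t + 1)).card = ∑ p ∈ antidiagonal t,
      2 * m * ((2 * m - 1) ^ p.1 * catalan p.1) * (excursions comp [] p.2).card := by
  rw [card_excursions_succ hinv]
  refine sum_congr rfl fun p _ => ?_
  simp [card_excursions_singleton hinv hcard, hcard, mul_assoc]

end Counting

section PlaneTree

variable {n : ℕ}

theorem _root_.IsMatchingF.eq_of_covers {M : Finset (Fin (2 * n) × Fin (2 * n))}
    (hM : IsMatchingF n M) {p q : Fin (2 * n) × Fin (2 * n)} {k : Fin (2 * n)} (hp : p ∈ M)
    (hq : q ∈ M) (hpk : p.1 = k ∨ p.2 = k) (hqk : q.1 = k ∨ q.2 = k) : p = q :=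
  (hM.2 k).unique ⟨hp, hpk⟩ ⟨hq, hqk⟩

/-- A pair of minimal length in a non-crossing perfect matching joins adjacent positions. -/
theorem _root_.IsPlaneTreeF.exists_adjacent {M : Finset (Fin (2 * (n + 1)) × Fin (2 * (n + 1)))}
    (hM : IsPlaneTreeF (n + 1) M) : ∃ a ∈ M, (a.2 : ℕ) = a.1 + 1 := by
  obtain ⟨hmatch, hnc⟩ := hM
  have ⟨hord, hcov⟩ := hmatch
  obtain ⟨a, ha, hmin⟩ := M.exists_min_image (fun p => (p.2 : ℕ) - p.1)
    ((hcov ⟨0, by omega⟩).exists.imp fun p hp => hp.1)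
  refine ⟨a, ha, by_contra fun hne => ?_⟩
  have ha' := Fin.lt_def.1 (hord a ha)
  obtain ⟨q, ⟨hq, hqc⟩, -⟩ := hcov ⟨a.1 + 1, by omega⟩
  have hq' := Fin.lt_def.1 (hord q hq)
  have hlen := hmin q hq
  have h1 := hnc a ha q hq
  have h2 := hnc q hq a ha
  simp only [Fin.lt_def, Fin.ext_iff] at h1 h2 hqc
  rcases hqc with hqc | hqc
  · by_cases h : q.2 = a.2
    · have := hmatch.eq_of_covers hq ha (Or.inr h) (Or.inr rfl)
      subst this
      omega
    · have := Fin.val_ne_of_ne h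
      omega
  · by_cases h : q.1 = a.1
    · have := hmatch.eq_of_covers hq ha (Or.inl h) (Or.inl rfl)
      subst this
      omega
    · have := Fin.val_ne_of_ne h
      omega

def skipTwo (n k : ℕ) : Fin (2 * n) ↪o Fin (2 * (n + 1)) :=
  OrderEmbedding.ofStrictMono
    (fun j => ⟨if (j : ℕ) < k then j else j + 2, by split <;> omega⟩)
    fun i j h => by
      simp only [Fin.lt_def] at h ⊢
      split_ifs <;> omega

theorem skipTwo_val (k : ℕ) (j : Fin (2 * n)) :
    (skipTwo n k j : ℕ) = if (j : ℕ) < k then (j : ℕ) else (j : ℕ) + 2 := rfl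

theorem skipTwo_ne (k : ℕ) (j : Fin (2 * n)) :
    (skipTwo n k j : ℕ) ≠ k ∧ (skipTwo n k j : ℕ) ≠ k + 1 := by
  rw [skipTwo_val]
  split <;> omega

theorem exists_skipTwo_eq {k : ℕ} (hk : k ≤ 2 * n) {x : Fin (2 * (n + 1))}
    (h₁ : (x : ℕ) ≠ k) (h₂ : (x : ℕ) ≠ k + 1) : ∃ j, skipTwo n k j = x := by
  have := x.2
  by_cases hx : (x : ℕ) < k
  · exact ⟨⟨x, by omega⟩, Fin.ext (by simp [skipTwo_val, hx])⟩
  · exact ⟨⟨x - 2, by omega⟩, Fin.ext (by simp only [skipTwo_val]; split_ifs <;> omega)⟩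

theorem ofFn_comp_skipTwo {k : ℕ} (hk : k ≤ 2 * n) (P : Fin (2 * (n + 1)) → A) :
    List.ofFn (P ∘ skipTwo n k) = (List.ofFn P).take k ++ (List.ofFn P).drop (k + 2) := by
  refine List.ext_getElem (by simp; omega) fun i h₁ h₂ => ?_
  simp only [List.getElem_ofFn, Function.comp_apply, List.getElem_append, List.getElem_take,
    List.getElem_drop, List.length_take, List.length_ofFn]
  split_ifs with hi <;> congr 1 <;> ext <;> simp only [skipTwo_val] <;> split_ifs <;> omega

theorem _root_.IsMatchingF.not_covers_of_ne {M : Finset (Fin (2 * n) × Fin (2 * n))}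
    (hM : IsMatchingF n M) {p q : Fin (2 * n) × Fin (2 * n)} {k : Fin (2 * n)} (hp : p ∈ M)
    (hq : q ∈ M) (hpq : p ≠ q) (hpk : p.1 = k ∨ p.2 = k) : ¬ (q.1 = k ∨ q.2 = k) :=
  fun hqk => hpq (hM.eq_of_covers hp hq hpk hqk)

def removeArch (k : ℕ) (M : Finset (Fin (2 * (n + 1)) × Fin (2 * (n + 1)))) :
    Finset (Fin (2 * n) × Fin (2 * n)) :=
  univ.filter fun q => Prod.map (skipTwo n k) (skipTwo n k) q ∈ M

def insertArch {k : ℕ} (hk : k ≤ 2 * n) (M : Finset (Fin (2 * n) × Fin (2 * n))) :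
    Finset (Fin (2 * (n + 1)) × Fin (2 * (n + 1))) :=
  insert (⟨k, by omega⟩, ⟨k + 1, by omega⟩) (M.image (Prod.map (skipTwo n k) (skipTwo n k)))

@[simp] theorem mem_removeArch {k : ℕ} {M : Finset (Fin (2 * (n + 1)) × Fin (2 * (n + 1)))}
    {q : Fin (2 * n) × Fin (2 * n)} :
    q ∈ removeArch k M ↔ Prod.map (skipTwo n k) (skipTwo n k) q ∈ M := by
  simp [removeArch]

theorem mem_insertArch {k : ℕ} {hk : k ≤ 2 * n} {M : Finset (Fin (2 * n) × Fin (2 * n))}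
    {p : Fin (2 * (n + 1)) × Fin (2 * (n + 1))} :
    p ∈ insertArch hk M ↔
      p = (⟨k, by omega⟩, ⟨k + 1, by omega⟩) ∨
        ∃ q ∈ M, Prod.map (skipTwo n k) (skipTwo n k) q = p :=
  by rw [insertArch, mem_insert, mem_image]

theorem _root_.IsPlaneTreeF.removeArch {M : Finset (Fin (2 * (n + 1)) × Fin (2 * (n + 1)))}
    {a : Fin (2 * (n + 1)) × Fin (2 * (n + 1))} (hM : IsPlaneTreeF (n + 1) M) (ha : a ∈ M)
    (hadj : (a.2 : ℕ) = a.1 + 1) : IsPlaneTreeF n (removeArch a.1 M) := by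
  obtain ⟨hmatch, hnc⟩ := hM
  have ⟨hord, hcov⟩ := hmatch
  refine ⟨⟨fun q hq => (skipTwo n a.1).lt_iff_lt.1 (hord _ (mem_removeArch.1 hq)),
    fun j => ?_⟩,
    fun q hq r hr hcross => hnc _ (mem_removeArch.1 hq) _ (mem_removeArch.1 hr)
      (by simpa only [Prod.map, (skipTwo n a.1).lt_iff_lt] using hcross)⟩
  obtain ⟨p, ⟨hp, hpj⟩, hpuniq⟩ := hcov (skipTwo n a.1 j)
  have hpa : p ≠ a := by
    intro hpa
    have := skipTwo_ne a.1 j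
    rcases hpj with h | h <;> rw [← h, hpa] at this
    exacts [this.1 rfl, this.2 hadj]
  have hoff : ∀ x, (p.1 = x ∨ p.2 = x) → ∃ i, skipTwo n a.1 i = x := fun x hx => by
    have h := hmatch.not_covers_of_ne hp ha hpa hx
    simp only [not_or, ← Fin.val_ne_iff, hadj] at h
    exact exists_skipTwo_eq (by omega) (Ne.symm h.1) (by omega)
  obtain ⟨j₁, hj₁⟩ := hoff _ (Or.inl rfl)
  obtain ⟨j₂, hj₂⟩ := hoff _ (Or.inr rfl)
  refine ⟨(j₁, j₂), ⟨by simpa [hj₁, hj₂], ?_⟩, fun q ⟨hq, hqj⟩ => ?_⟩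
  · rcases hpj with h | h
    exacts [Or.inl ((skipTwo n a.1).injective (hj₁.trans h)),
      Or.inr ((skipTwo n a.1).injective (hj₂.trans h))]
  · obtain rfl := hpuniq _ ⟨mem_removeArch.1 hq, by rcases hqj with h | h <;> simp [h]⟩
    exact Prod.ext ((skipTwo n a.1).injective hj₁).symm ((skipTwo n a.1).injective hj₂).symm

theorem _root_.IsMatchingF.insertArch {M : Finset (Fin (2 * n) × Fin (2 * n))}
    (hM : IsMatchingF n M) {k : ℕ} (hk : k ≤ 2 * n) :
    IsMatchingF (n + 1) (insertArch hk M) := by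
  obtain ⟨hord, hcov⟩ := hM
  have he : ∀ j, (skipTwo n k j : ℕ) ≠ k ∧ (skipTwo n k j : ℕ) ≠ k + 1 := skipTwo_ne k
  refine ⟨fun p hp => ?_, fun x => ?_⟩
  · rcases mem_insertArch.1 hp with rfl | ⟨q, hq, rfl⟩
    exacts [Fin.lt_def.2 (Nat.lt_succ_self k), (skipTwo n k).lt_iff_lt.2 (hord q hq)]
  by_cases hx : (x : ℕ) = k ∨ (x : ℕ) = k + 1
  · refine ⟨_, ⟨mem_insert_self _ _, ?_⟩, fun p ⟨hp, hpx⟩ => ?_⟩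
    · rcases hx with hx | hx
      exacts [Or.inl (Fin.ext hx.symm), Or.inr (Fin.ext hx.symm)]
    · rcases mem_insertArch.1 hp with rfl | ⟨q, -, rfl⟩
      · rfl
      · have := he q.1
        have := he q.2
        rcases hpx with rfl | rfl <;> simp at hx <;> omega
  · rw [not_or] at hx
    obtain ⟨j, rfl⟩ : ∃ j, skipTwo n k j = x := exists_skipTwo_eq hk hx.1 hx.2
    obtain ⟨q, ⟨hq, hqj⟩, hquniq⟩ := hcov j
    refine ⟨Prod.map (skipTwo n k) (skipTwo n k) q, ⟨mem_insertArch.2 (Or.inr ⟨q, hq, rfl⟩), ?_⟩,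
      fun p ⟨hp, hpj⟩ => ?_⟩
    · rcases hqj with h | h <;> simp [h]
    · rcases mem_insertArch.1 hp with rfl | ⟨q', hq', rfl⟩
      · rcases hpj with h | h <;> simp [Fin.ext_iff] at h <;> omega
      · rw [hquniq q' ⟨hq', by simpa using hpj⟩]

theorem _root_.NonCrossingF.insertArch {M : Finset (Fin (2 * n) × Fin (2 * n))}
    (hM : NonCrossingF n M) {k : ℕ} (hk : k ≤ 2 * n) :
    NonCrossingF (n + 1) (insertArch hk M) := by
  intro p hp r hr hcross
  simp only [Fin.lt_def] at hcross
  rcases mem_insertArch.1 hp with rfl | ⟨q, hq, rfl⟩ <;>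
    rcases mem_insertArch.1 hr with rfl | ⟨q', hq', rfl⟩
  · exact lt_irrefl _ hcross.1
  · have := skipTwo_ne k q'.1
    simp at hcross
    omega
  · have := skipTwo_ne k q.2
    simp at hcross
    omega
  · exact hM q hq q' hq' (by simpa only [Fin.lt_def.symm, Prod.map, OrderEmbedding.lt_iff_lt]
      using hcross)

theorem _root_.IsValidF.removeArch {P : Fin (2 * (n + 1)) → A}
    {M : Finset (Fin (2 * (n + 1)) × Fin (2 * (n + 1)))} (hV : IsValidF (n + 1) P comp M)
    (k : ℕ) : IsValidF n (P ∘ skipTwo n k) comp (removeArch k M) :=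
  fun _ hq => hV _ (mem_removeArch.1 hq)

theorem _root_.IsValidF.insertArch {P : Fin (2 * (n + 1)) → A}
    {M : Finset (Fin (2 * n) × Fin (2 * n))} {k : ℕ} (hk : k ≤ 2 * n)
    (hV : IsValidF n (P ∘ skipTwo n k) comp M)
    (harch : P ⟨k + 1, by omega⟩ = comp (P ⟨k, by omega⟩)) :
    IsValidF (n + 1) P comp (insertArch hk M) := by
  intro p hp
  rcases mem_insertArch.1 hp with rfl | ⟨q, hq, rfl⟩
  exacts [harch, hV q hq]

end PlaneTree

section Validity

theorem ofFn_eq_take_append_cons_cons_drop {n : ℕ} (P : Fin (2 * (n + 1)) → A)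
    {i j : Fin (2 * (n + 1))} (hij : (j : ℕ) = i + 1) :
    List.ofFn P = (List.ofFn P).take i ++ P i :: P j :: (List.ofFn P).drop (i + 2) := by
  have hi : (i : ℕ) < (List.ofFn P).length := by rw [List.length_ofFn]; exact i.2
  have hj : (i : ℕ) + 1 < (List.ofFn P).length := by rw [List.length_ofFn, ← hij]; exact j.2
  have hPj : (List.ofFn P)[(i : ℕ) + 1] = P j := by
    rw [List.getElem_ofFn]
    exact congrArg P (Fin.ext hij.symm)
  conv_lhs => rw [← List.take_append_drop i (List.ofFn P), ← List.getElem_cons_drop hi,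
    ← List.getElem_cons_drop hj, hPj, List.getElem_ofFn]

theorem _root_.IsPlaneTreeF.stackFrom_ofFn_eq_nil (hinv : Function.Involutive comp) :
    ∀ {n : ℕ} {P : Fin (2 * n) → A} {M : Finset (Fin (2 * n) × Fin (2 * n))},
      IsPlaneTreeF n M → IsValidF n P comp M → stackFrom comp [] (List.ofFn P) = []
  | 0, P, _, _, _ => by simp
  | n + 1, P, M, hM, hV => by
    obtain ⟨a, ha, hadj⟩ := hM.exists_adjacent
    have hk : (a.1 : ℕ) ≤ 2 * n := by omega
    have ih := IsPlaneTreeF.stackFrom_ofFn_eq_nil hinv (hM.removeArch ha hadj) (hV.removeArch a.1)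
    rw [ofFn_comp_skipTwo hk] at ih
    rw [ofFn_eq_take_append_cons_cons_drop P hadj, hV a ha, stackFrom_cancel hinv List.isChain_nil,
      ih]

theorem exists_planeTree_of_stackFrom_eq_nil (hinv : Function.Involutive comp) :
    ∀ {n : ℕ} {P : Fin (2 * n) → A}, stackFrom comp [] (List.ofFn P) = [] →
      ∃ M, IsPlaneTreeF n M ∧ IsValidF n P comp M
  | 0, P, _ => ⟨∅, ⟨⟨by simp, fun x => absurd x.2 (by omega)⟩, by simp [NonCrossingF]⟩,
      by simp [IsValidF]⟩
  | n + 1, P, h => by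
    obtain ⟨x, b, y, hxy⟩ := exists_cancel_of_stackFrom_eq_nil hinv
      (by simp [← List.length_eq_zero_iff]) h
    have hlen := congrArg List.length hxy
    simp only [List.length_ofFn, List.length_append, List.length_cons] at hlen
    have hk : x.length ≤ 2 * n := by omega
    have hsplit := (ofFn_eq_take_append_cons_cons_drop P
      (i := ⟨x.length, by omega⟩) (j := ⟨x.length + 1, by omega⟩) rfl).symm.trans hxy
    rw [hxy, List.take_left' rfl] at hsplit
    obtain ⟨hb, hcb⟩ : _ ∧ _ := by simpa using List.append_cancel_left hsplit
    have hrest : stackFrom comp [] (List.ofFn (P ∘ skipTwo n x.length)) = [] :=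
      calc stackFrom comp [] (List.ofFn (P ∘ skipTwo n x.length))
          = stackFrom comp [] (x ++ y) := by rw [ofFn_comp_skipTwo hk, hxy]; simp
        _ = [] := by rw [← stackFrom_cancel hinv List.isChain_nil x y b, ← hxy, h]
    obtain ⟨M', hM', hV'⟩ := exists_planeTree_of_stackFrom_eq_nil hinv hrest
    exact ⟨_, ⟨hM'.1.insertArch hk, hM'.2.insertArch hk⟩,
      hV'.insertArch hk (by rw [hb, hcb])⟩

theorem stackFrom_ofFn_eq_nil_iff (hinv : Function.Involutive comp) {n : ℕ}
    (P : Fin (2 * n) → A) :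
    stackFrom comp [] (List.ofFn P) = [] ↔ ∃ M, IsPlaneTreeF n M ∧ IsValidF n P comp M :=
  ⟨exists_planeTree_of_stackFrom_eq_nil hinv,
    fun ⟨_, hM, hV⟩ => IsPlaneTreeF.stackFrom_ofFn_eq_nil hinv hM hV⟩

end Validity

end ComplementaryWord

open ComplementaryWord in
theorem count_valid_words_general {A : Type*} [Fintype A] (m : ℕ)
    (hcard : Fintype.card A = 2 * m)
    (comp : A → A) (hinv : Function.Involutive comp)
    (n : ℕ) :
    Set.ncard {P : Fin (2 * n) → A | ∃ M : Finset (Fin (2 * n) × Fin (2 * n)),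
        IsPlaneTreeF n M ∧ IsValidF n P comp M} =
      ∑ c : Composition n,
        (2 * m) ^ c.length * (2 * m - 1) ^ (n - c.length) *
          (c.blocks.map fun a => catalan (a - 1)).prod := by
  have hvalid : {P : Fin (2 * n) → A | ∃ M, IsPlaneTreeF n M ∧ IsValidF n P comp M} =
      {P | stackFrom comp [] (List.ofFn P) = []} :=
    Set.ext fun P => (stackFrom_ofFn_eq_nil_iff hinv P).symm
  rw [hvalid, ← card_excursions_nil, Composition.eq_sum_prod_map_blocks
    (f := fun t => (excursions comp [] t).card)
    (g := fun a => 2 * m * ((2 * m - 1) ^ (a - 1) * catalan (a - 1)))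
    (by simp [excursions_zero]) fun t => by simpa using card_excursions_nil_succ hinv hcard t]
  refine sum_congr rfl fun c _ => ?_
  rw [List.prod_map_mul_pow_sub_one_mul _ _ _ _ fun a ha => c.one_le_blocks ha, c.blocks_sum]

/-- Over a complementary alphabet with `2m` letters, the number
of words of length `2n` admitting at least one valid plane tree equals
`∑_{λ ⊨ n} (2m)^{k(λ)} (2m-1)^{n-k(λ)} ∏ᵢ C_{λᵢ-1}`, summed over the
compositions `λ = (λ₁,…,λ_k)` of `n`. -/
theorem count_valid_words {A : Type*} [Fintype A] (m : ℕ) (hm : 1 ≤ m)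
    (hcard : Fintype.card A = 2 * m)
    (comp : A → A) (hinv : Function.Involutive comp) (hff : ∀ a, comp a ≠ a)
    (n : ℕ) :
    Set.ncard {P : Fin (2 * n) → A | ∃ M : Finset (Fin (2 * n) × Fin (2 * n)),
        IsPlaneTreeF n M ∧ IsValidF n P comp M} =
      ∑ c : Composition n,
        (2 * m) ^ c.length * (2 * m - 1) ^ (n - c.length) *
          (c.blocks.map fun a => catalan (a - 1)).prod :=
  count_valid_words_general m hcard comp hinv n
end
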